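/- arXiv:1207.5811 — 13 statements merged into one kernel-verified Lean document; each statement's English description precedes it below -/
import Mathlib

section
/- If m and n are coprime positive integers, then Φ_m(x^n) = ∏_{d ∣ n} Φ_{m·d}(x). -/
open Polynomial Finset

/-- Double-product decomposition of a product over divisors of a product of coprimes. -/
lemma prod_divisors_mul_coprime {M : Type*} [CommMonoid M] {m n : ℕ} (hm : m ≠ 0) (hn : n ≠ 0)
    (h : m.Coprime n) (f : ℕ → M) :
    ∏ k ∈ (m * n).divisors, f k = ∏ e ∈ m.divisors, ∏ d ∈ n.divisors, f (e * d) := by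
  rw [← Finset.prod_product']
  refine (Finset.prod_nbij (fun p : ℕ × ℕ => p.1 * p.2) ?_ ?_ ?_ (fun p _ => rfl)).symm
  · rintro ⟨e, d⟩ hp
    simp only [Finset.mem_product, Nat.mem_divisors] at hp ⊢
    exact ⟨mul_dvd_mul hp.1.1 hp.2.1, mul_ne_zero hm hn⟩
  · rintro ⟨e₁, d₁⟩ hp₁ ⟨e₂, d₂⟩ hp₂ heq
    simp only [Finset.mem_coe, Finset.mem_product, Nat.mem_divisors] at hp₁ hp₂
    simp only at heq
    have hd₁ : Nat.Coprime d₁ m := (Nat.Coprime.symm h).coprime_dvd_left hp₁.2.1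
    have hd₂ : Nat.Coprime d₂ m := (Nat.Coprime.symm h).coprime_dvd_left hp₂.2.1
    have he₁ : Nat.Coprime e₁ n := h.coprime_dvd_left hp₁.1.1
    have he₂ : Nat.Coprime e₂ n := h.coprime_dvd_left hp₂.1.1
    have h1 : e₁ = e₂ := by
      have : Nat.gcd (e₁ * d₁) m = Nat.gcd (e₂ * d₂) m := by rw [heq]
      rwa [Nat.Coprime.gcd_mul_right_cancel _ hd₁, Nat.Coprime.gcd_mul_right_cancel _ hd₂,
        Nat.gcd_eq_left hp₁.1.1, Nat.gcd_eq_left hp₂.1.1] at this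
    have h2 : d₁ = d₂ := by
      have : Nat.gcd (e₁ * d₁) n = Nat.gcd (e₂ * d₂) n := by rw [heq]
      rwa [Nat.Coprime.gcd_mul_left_cancel _ he₁, Nat.Coprime.gcd_mul_left_cancel _ he₂,
        Nat.gcd_eq_left hp₁.2.1, Nat.gcd_eq_left hp₂.2.1] at this
    rw [Prod.mk.injEq]; exact ⟨h1, h2⟩
  · intro k hk
    simp only [Finset.mem_coe, Nat.mem_divisors] at hk
    obtain ⟨e, d, he, hd, hed⟩ := Nat.dvd_mul.mp hk.1
    refine ⟨(e, d), ?_⟩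
    simp only [Finset.mem_coe, Finset.mem_product, Nat.mem_divisors, Set.mem_image]
    exact ⟨⟨⟨he, hm⟩, hd, hn⟩, hed⟩

theorem expand_cyclotomic_eq_prod (m n : ℕ) (hm : 0 < m) (hn : 0 < n)
    (hcop : Nat.Coprime m n) :
    (Polynomial.expand ℤ n) (Polynomial.cyclotomic m ℤ) =
      ∏ d ∈ n.divisors, Polynomial.cyclotomic (m * d) ℤ := by
  induction m using Nat.strong_induction_on with
  | _ m IH =>
  have key : ∏ e ∈ m.divisors, (Polynomial.expand ℤ n) (Polynomial.cyclotomic e ℤ) =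
      ∏ e ∈ m.divisors, ∏ d ∈ n.divisors, Polynomial.cyclotomic (e * d) ℤ := by
    have h2 := prod_divisors_mul_coprime hm.ne' hn.ne' hcop (fun k => Polynomial.cyclotomic k ℤ)
    rw [← map_prod, Polynomial.prod_cyclotomic_eq_X_pow_sub_one hm, ← h2,
      Polynomial.prod_cyclotomic_eq_X_pow_sub_one (mul_pos hm hn)]
    simp [Polynomial.expand_X, mul_comm m n, ← pow_mul]
  rw [← Nat.cons_self_properDivisors hm.ne', Finset.prod_cons, Finset.prod_cons] at key
  have hIH : ∏ e ∈ m.properDivisors, (Polynomial.expand ℤ n) (Polynomial.cyclotomic e ℤ) =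
      ∏ e ∈ m.properDivisors, ∏ d ∈ n.divisors, Polynomial.cyclotomic (e * d) ℤ := by
    refine Finset.prod_congr rfl fun e he => ?_
    rw [Nat.mem_properDivisors] at he
    exact IH e he.2 (Nat.pos_of_mem_divisors (Nat.mem_divisors.mpr ⟨he.1, hm.ne'⟩))
      (Nat.Coprime.coprime_dvd_left he.1 hcop)
  rw [hIH] at key
  have hne : ∏ e ∈ m.properDivisors, ∏ d ∈ n.divisors, Polynomial.cyclotomic (e * d) ℤ ≠ 0 := by
    refine Finset.prod_ne_zero_iff.mpr fun e _ => Finset.prod_ne_zero_iff.mpr fun d _ => ?_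
    exact Polynomial.cyclotomic_ne_zero _ ℤ
  exact mul_right_cancel₀ hne key
end

section
/- Let d_1, …, d_k be pairwise coprime positive integers with product n. Then Φ_n(x) is the greatest common divisor in ℤ[x] of the polynomials Φ_{d_i}(x^{n/d_i}) for i = 1, …, k. -/
/-!
Each `Φ_{d_i}(x^{n/d_i})` vanishes at a primitive `n`-th root of unity, so `Φ_n` divides it.
Conversely, a common divisor `g` divides `x^n - 1 = ∏_{e ∣ n} Φ_e`. If `Φ_e` divided `g` for a
proper divisor `e` of `n`, then for a primitive `e`-th root `ξ` every `ξ^{n/d_i}` would be a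
primitive `d_i`-th root of unity, forcing `d_i ∣ e` for all `i`, hence `n ∣ e`. Irreducibility
of the `Φ_e` over `ℚ` then gives `g ∣ Φ_n` in `ℚ[x]`, and Gauss's lemma brings this back to
`ℤ[x]`.
-/

open Polynomial

theorem cyclotomic_dvd_expand_cyclotomic {d n : ℕ} (hn : 0 < n) (hdn : d ∣ n)
    (R : Type*) [CommRing R] : cyclotomic n R ∣ expand R (n / d) (cyclotomic d R) := by
  have hℤ : cyclotomic n ℤ ∣ expand ℤ (n / d) (cyclotomic d ℤ) := by
    obtain ⟨ζ, hζ⟩ : ∃ ζ : ℂ, IsPrimitiveRoot ζ n :=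
      ⟨_, Complex.isPrimitiveRoot_exp n hn.ne'⟩
    rw [cyclotomic_eq_minpoly hζ hn]
    refine minpoly.isIntegrallyClosed_dvd (hζ.isIntegral hn) ?_
    rw [expand_aeval, ← eval_map_algebraMap, map_cyclotomic]
    exact (hζ.pow hn (Nat.div_mul_cancel hdn).symm).isRoot_cyclotomic
      (Nat.pos_of_dvd_of_pos hdn hn)
  simpa only [map_expand, map_cyclotomic] using map_dvd (Int.castRingHom R) hℤ

theorem expand_cyclotomic_dvd_X_pow_sub_one {d n : ℕ} (hdn : d ∣ n) (R : Type*) [CommRing R] :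
    expand R (n / d) (cyclotomic d R) ∣ X ^ n - 1 := by
  simpa [← pow_mul, Nat.div_mul_cancel hdn] using
    map_dvd (expand R (n / d)) (cyclotomic.dvd_X_pow_sub_one d R)

theorem dvd_of_cyclotomic_dvd_expand_cyclotomic {R : Type*} [CommRing R] [Algebra R ℂ]
    {e d m : ℕ} (he : 0 < e) (hd : 0 < d)
    (h : cyclotomic e R ∣ expand R m (cyclotomic d R)) : d ∣ e := by
  obtain ⟨ξ, hξ⟩ : ∃ ξ : ℂ, IsPrimitiveRoot ξ e := ⟨_, Complex.isPrimitiveRoot_exp e he.ne'⟩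
  have hξe : aeval ξ (cyclotomic e R) = 0 := by
    rw [← eval_map_algebraMap, map_cyclotomic]
    exact hξ.isRoot_cyclotomic he
  have hξm : IsPrimitiveRoot (ξ ^ m) d := by
    obtain ⟨c, hc⟩ := h
    rw [← isRoot_cyclotomic_iff_charZero hd, IsRoot.def, ← map_cyclotomic d (algebraMap R ℂ),
      eval_map_algebraMap, ← expand_aeval, hc, map_mul, hξe, zero_mul]
  exact hξm.dvd_of_pow_eq_one e (by rw [← pow_mul, mul_comm, pow_mul, hξ.pow_eq_one, one_pow])

theorem dvd_cyclotomic_of_dvd_X_pow_sub_one {n : ℕ} (hn : 0 < n) {g : ℚ[X]}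
    (hg : g ∣ X ^ n - 1) (hproper : ∀ e ∈ n.properDivisors, ¬cyclotomic e ℚ ∣ g) :
    g ∣ cyclotomic n ℚ := by
  rw [← prod_cyclotomic_eq_X_pow_sub_one hn, ← Nat.insert_self_properDivisors hn.ne',
    Finset.prod_insert Nat.self_notMem_properDivisors] at hg
  refine (IsCoprime.prod_right fun e he => ?_).dvd_of_dvd_mul_right hg
  exact ((cyclotomic.irreducible_rat (Nat.pos_of_mem_properDivisors he)).coprime_iff_not_dvd.mpr
    (hproper e he)).symm

theorem cyclotomic_is_gcd_of_coprime_factors (k : ℕ) (hk : 0 < k)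
    (d : Fin k → ℕ) (hd : ∀ i, 0 < d i)
    (hcop : ∀ i j, i ≠ j → Nat.Coprime (d i) (d j))
    (n : ℕ) (hn : n = ∏ i, d i) :
    (∀ i, Polynomial.cyclotomic n ℤ ∣
        (Polynomial.expand ℤ (n / d i)) (Polynomial.cyclotomic (d i) ℤ)) ∧
    ∀ g : Polynomial ℤ,
      (∀ i, g ∣ (Polynomial.expand ℤ (n / d i)) (Polynomial.cyclotomic (d i) ℤ)) →
        g ∣ Polynomial.cyclotomic n ℤ := by
  have hnpos : 0 < n := hn ▸ Finset.prod_pos fun i _ => hd i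
  have hdvd : ∀ i, d i ∣ n := fun i => hn ▸ Finset.dvd_prod_of_mem d (Finset.mem_univ i)
  refine ⟨fun i => cyclotomic_dvd_expand_cyclotomic hnpos (hdvd i) ℤ, fun g hg => ?_⟩
  let i₀ : Fin k := ⟨0, hk⟩
  have hgprim : g.IsPrimitive := isPrimitive_of_dvd ((cyclotomic.monic _ ℤ).expand
    (Nat.div_pos (Nat.le_of_dvd hnpos (hdvd i₀)) (hd i₀))).isPrimitive (hg i₀)
  have hgℚ : ∀ i, g.map (algebraMap ℤ ℚ) ∣ expand ℚ (n / d i) (cyclotomic (d i) ℚ) := by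
    intro i
    simpa only [map_expand, map_cyclotomic] using map_dvd (algebraMap ℤ ℚ) (hg i)
  refine hgprim.dvd_of_fraction_map_dvd_fraction_map (K := ℚ) ?_
  rw [map_cyclotomic]
  refine dvd_cyclotomic_of_dvd_X_pow_sub_one hnpos
    ((hgℚ i₀).trans (expand_cyclotomic_dvd_X_pow_sub_one (hdvd i₀) ℚ)) fun e he hcyc => ?_
  have hepos : 0 < e := Nat.pos_of_mem_properDivisors he
  have hne : n ∣ e := hn ▸ Fintype.prod_dvd_of_isRelPrime
    (fun i j hij => Nat.coprime_iff_isRelPrime.mp (hcop i j hij))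
    fun i => dvd_of_cyclotomic_dvd_expand_cyclotomic hepos (hd i) (hcyc.trans (hgℚ i))
  exact (Nat.mem_properDivisors.mp he).2.not_ge (Nat.le_of_dvd hepos hne)
end

section
/- Let n > 1 be a positive integer. Then Φ_n(x) is the greatest common divisor in ℤ[x] of the polynomials 1 + x^{n/p} + x^{2n/p} + … + x^{(p-1)n/p} taken over all primes p dividing n. -/
/-!
Since `Φ_p(X^{n/p}) (X^{n/p} - 1) = X^n - 1`, the polynomial `Φ_p(X^{n/p})` is the product of the
`Φ_d` over the divisors `d` of `n` not dividing `n/p`; `Φ_n` is one of them. Every proper divisor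
of `n` divides some `n/p`, so `Φ_n` is the only factor common to all these products. Distinct
cyclotomic polynomials are coprime over `ℚ`, so there a common divisor of the products divides
`Φ_n`. A common divisor over `ℤ` divides a monic polynomial, hence is primitive, and Gauss's lemma
brings the divisibility back to `ℤ`.
-/

open Polynomial Finset Function

section PairwiseCoprime

variable {ι R : Type*} [CommSemiring R] [DecidableEq ι] {f : ι → R} {g : R}

theorem dvd_prod_inter_of_pairwise_isCoprime (hf : Pairwise (IsCoprime on f)) {A B : Finset ι}
    (hA : g ∣ ∏ i ∈ A, f i) (hB : g ∣ ∏ i ∈ B, f i) : g ∣ ∏ i ∈ A ∩ B, f i := by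
  have hcop : IsCoprime (∏ i ∈ B, f i) (∏ i ∈ A \ B, f i) :=
    IsCoprime.prod_left fun i hi => IsCoprime.prod_right fun j hj =>
      hf fun hij => (mem_sdiff.1 hj).2 (hij ▸ hi)
  rw [← prod_inter_mul_prod_sdiff A B] at hA
  exact (hcop.of_isCoprime_of_dvd_left hB).dvd_of_dvd_mul_right hA

theorem dvd_prod_sdiff_biUnion_of_pairwise_isCoprime {κ : Type*} (hf : Pairwise (IsCoprime on f))
    {s : Finset ι} (hs : g ∣ ∏ i ∈ s, f i) (D : κ → Finset ι) (T : Finset κ)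
    (hT : ∀ k ∈ T, g ∣ ∏ i ∈ s \ D k, f i) : g ∣ ∏ i ∈ s \ T.biUnion D, f i := by
  classical
  induction T using Finset.induction_on with
  | empty => simpa using hs
  | insert k T _ ih =>
    rw [biUnion_insert, sdiff_union_distrib]
    exact dvd_prod_inter_of_pairwise_isCoprime hf (hT k (mem_insert_self k T))
      (ih fun k' hk' => hT k' (mem_insert_of_mem hk'))

end PairwiseCoprime

theorem Nat.exists_mem_primeFactors_dvd_div_of_dvd_of_ne {d n : ℕ} (hdn : d ∣ n) (hn : n ≠ 0)
    (hd : d ≠ n) : ∃ p ∈ n.primeFactors, d ∣ n / p := by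
  obtain ⟨m, rfl⟩ := hdn
  have hm : m ≠ 1 := by rintro rfl; simp at hd
  obtain ⟨p, hp, hpm⟩ := Nat.exists_prime_and_dvd hm
  refine ⟨p, Nat.mem_primeFactors.2 ⟨hp, dvd_mul_of_dvd_right hpm d, hn⟩, ?_⟩
  rw [Nat.mul_div_assoc d hpm]
  exact dvd_mul_right d _

theorem Nat.divisors_sdiff_biUnion_divisors_div_primeFactors {n : ℕ} (hn : n ≠ 0) :
    n.divisors \ n.primeFactors.biUnion (fun p => (n / p).divisors) = {n} := by
  ext d
  simp only [mem_sdiff, mem_biUnion, Nat.mem_divisors, not_exists, not_and, mem_singleton]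
  constructor
  · rintro ⟨⟨hdn, -⟩, hdiv⟩
    by_contra hd
    obtain ⟨p, hp, hdp⟩ := Nat.exists_mem_primeFactors_dvd_div_of_dvd_of_ne hdn hn hd
    have hp' := Nat.dvd_of_mem_primeFactors hp
    exact hdiv p hp hdp ((Nat.div_ne_zero_iff_of_dvd hp').2 ⟨hn, ne_zero_of_dvd_ne_zero hn hp'⟩)
  · rintro rfl
    refine ⟨⟨dvd_rfl, hn⟩, fun p hp hdvd hdiv => ?_⟩
    have hlt := Nat.div_lt_self (Nat.pos_of_ne_zero hn) (Nat.prime_of_mem_primeFactors hp).one_lt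
    exact hlt.not_ge (Nat.le_of_dvd (Nat.pos_of_ne_zero hdiv) hdvd)

theorem Polynomial.sum_X_pow_mul_div_eq_prod_cyclotomic (R : Type*) [CommRing R] {p n : ℕ}
    (hp : p ∣ n) (hn : n ≠ 0) :
    ∑ i ∈ range p, (X : R[X]) ^ (i * (n / p)) =
      ∏ d ∈ n.divisors \ (n / p).divisors, cyclotomic d R := by
  have hnp : n / p ≠ 0 := (Nat.div_ne_zero_iff_of_dvd hp).2 ⟨hn, ne_zero_of_dvd_ne_zero hn hp⟩
  apply (monic_X_pow_sub_C (1 : R) hnp).isRegular.right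
  simp only [map_one]
  rw [mul_comm (∏ d ∈ _, _),
    X_pow_sub_one_mul_prod_cyclotomic_eq_X_pow_sub_one_of_dvd R (Nat.div_dvd_of_dvd hp) hn]
  simp only [mul_comm _ (n / p), pow_mul]
  rw [geom_sum_mul, ← pow_mul, Nat.div_mul_cancel hp]

theorem cyclotomic_is_gcd_of_prime_power_sums (n : ℕ) (hn : 1 < n) :
    (∀ p ∈ n.primeFactors,
        Polynomial.cyclotomic n ℤ ∣
          ∑ i ∈ Finset.range p, (Polynomial.X : Polynomial ℤ) ^ (i * (n / p))) ∧
    ∀ g : Polynomial ℤ,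
      (∀ p ∈ n.primeFactors,
          g ∣ ∑ i ∈ Finset.range p, (Polynomial.X : Polynomial ℤ) ^ (i * (n / p))) →
        g ∣ Polynomial.cyclotomic n ℤ := by
  have hn0 : n ≠ 0 := by omega
  have hsum (R : Type) [CommRing R] (p) (hp : p ∈ n.primeFactors) :=
    sum_X_pow_mul_div_eq_prod_cyclotomic R (Nat.dvd_of_mem_primeFactors hp) hn0
  have hS := Nat.divisors_sdiff_biUnion_divisors_div_primeFactors hn0
  refine ⟨fun p hp => ?_, fun g hg => ?_⟩
  · rw [hsum ℤ p hp]
    have hmem : n ∈ n.divisors \ n.primeFactors.biUnion (fun p => (n / p).divisors) :=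
      hS ▸ mem_singleton_self n
    exact dvd_prod_of_mem _ (sdiff_subset_sdiff subset_rfl (subset_biUnion_of_mem _ hp) hmem)
  · obtain ⟨p₀, hp₀⟩ := Nat.nonempty_primeFactors.2 hn
    have hprim : g.IsPrimitive :=
      isPrimitive_of_dvd (monic_prod_of_monic _ _ fun d _ => cyclotomic.monic d ℤ).isPrimitive
        (hsum ℤ p₀ hp₀ ▸ hg p₀ hp₀)
    have hgℚ (p) (hp : p ∈ n.primeFactors) :
        g.map (Int.castRingHom ℚ) ∣ ∏ d ∈ n.divisors \ (n / p).divisors, cyclotomic d ℚ := by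
      rw [← hsum ℚ p hp]
      simpa only [Polynomial.map_sum, Polynomial.map_pow, Polynomial.map_X] using
        Polynomial.map_dvd (Int.castRingHom ℚ) (hg p hp)
    rw [IsPrimitive.Int.dvd_iff_map_cast_dvd_map_cast _ _ hprim, map_cyclotomic_int]
    simpa [hS] using
      dvd_prod_sdiff_biUnion_of_pairwise_isCoprime (fun _ _ => cyclotomic.isCoprime_rat)
        ((hgℚ p₀ hp₀).trans (prod_dvd_prod_of_subset _ _ _ sdiff_subset)) _ _ hgℚ
end

section
/- Let n be a positive integer and p a prime not dividing n. Then Φ_{np}(x) = gcd(1 + x^n + x^{2n} + … + x^{n(p-1)}, Φ_n(x^p)) in ℤ[x]. -/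
/-!
Writing `S = ∑_{i<p} X^{ni}`, we have `S · (X^n - 1) = X^{np} - 1`. Since `n` is a proper divisor
of `np`, `Φ_{np} · (X^n - 1)` divides `X^{np} - 1`, so `Φ_{np} ∣ S`; and `Φ_n(X^p) = Φ_{np} Φ_n`
because `p ∤ n`. Conversely, over `ℚ` the polynomial `X^{np} - 1` is separable, so `S` is coprime
to `X^n - 1` and hence to `Φ_n`. A common divisor `g` of `S` and `Φ_{np} Φ_n` is therefore, over
`ℚ`, coprime to `Φ_n` and divides `Φ_{np}`; as a divisor of the monic `S` it is primitive, and
Gauss's lemma brings the divisibility back to `ℤ[X]`.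
-/

open Polynomial Finset

namespace Polynomial

section GeomSum

variable {R : Type*} [CommRing R]

theorem geom_sum_X_pow_mul_X_pow_sub_one (n p : ℕ) :
    (∑ i ∈ range p, (X : R[X]) ^ (n * i)) * (X ^ n - 1) = X ^ (n * p) - 1 := by
  simp_rw [pow_mul, geom_sum_mul]

theorem monic_geom_sum_X_pow [Nontrivial R] {n p : ℕ} (hn : n ≠ 0) (hp : p ≠ 0) :
    (∑ i ∈ range p, (X : R[X]) ^ (n * i)).Monic := by
  have hmonic : ∀ {k : ℕ}, k ≠ 0 → ((X : R[X]) ^ k - 1).Monic := fun hk => by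
    simpa using monic_X_pow_sub_C (1 : R) hk
  refine (hmonic hn).of_mul_monic_right ?_
  rw [geom_sum_X_pow_mul_X_pow_sub_one]
  exact hmonic (mul_ne_zero hn hp)

theorem cyclotomic_dvd_geom_sum_X_pow [IsDomain R] {n p : ℕ} (hn : 0 < n) (hp : 1 < p) :
    cyclotomic (n * p) R ∣ ∑ i ∈ range p, (X : R[X]) ^ (n * i) := by
  have hn_proper : n ∈ (n * p).properDivisors :=
    Nat.mem_properDivisors.2 ⟨dvd_mul_right n p, lt_mul_of_one_lt_right hn hp⟩
  have hdvd := X_pow_sub_one_mul_cyclotomic_dvd_X_pow_sub_one_of_dvd R hn_proper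
  rw [← geom_sum_X_pow_mul_X_pow_sub_one, mul_comm] at hdvd
  exact (mul_dvd_mul_iff_right (by simpa using X_pow_sub_C_ne_zero hn (1 : R))).1 hdvd

end GeomSum

theorem isCoprime_geom_sum_X_pow_cyclotomic {K : Type*} [Field K] {n p : ℕ}
    (hnp : ((n * p : ℕ) : K) ≠ 0) :
    IsCoprime (∑ i ∈ range p, (X : K[X]) ^ (n * i)) (cyclotomic n K) := by
  have hsep : ((∑ i ∈ range p, (X : K[X]) ^ (n * i)) * (X ^ n - 1)).Separable := by
    rw [geom_sum_X_pow_mul_X_pow_sub_one]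
    exact X_pow_sub_one_separable_iff.2 hnp
  exact hsep.isCoprime.of_isCoprime_of_dvd_right (cyclotomic.dvd_X_pow_sub_one n K)

theorem IsPrimitive.of_dvd {R : Type*} [CommSemiring R] {f g : R[X]} (hf : f.IsPrimitive)
    (hgf : g ∣ f) : g.IsPrimitive :=
  fun r hr => hf r (hr.trans hgf)

theorem IsPrimitive.Int.dvd_of_dvd_mul_of_isCoprime_map {g a b : ℤ[X]} (hg : g.IsPrimitive)
    (hcop : IsCoprime (g.map (Int.castRingHom ℚ)) (b.map (Int.castRingHom ℚ)))
    (hgab : g ∣ a * b) : g ∣ a := by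
  refine (IsPrimitive.Int.dvd_iff_map_cast_dvd_map_cast g a hg).2 (hcop.dvd_of_dvd_mul_right ?_)
  simpa only [Polynomial.map_mul] using map_dvd (Int.castRingHom ℚ) hgab

end Polynomial

theorem cyclotomic_np_eq_gcd (n p : ℕ) (hn : 0 < n) (hp : p.Prime) (hpn : ¬ p ∣ n) :
    (Polynomial.cyclotomic (n * p) ℤ ∣
        ∑ i ∈ Finset.range p, (Polynomial.X : Polynomial ℤ) ^ (n * i)) ∧
    (Polynomial.cyclotomic (n * p) ℤ ∣
        (Polynomial.expand ℤ p) (Polynomial.cyclotomic n ℤ)) ∧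
    ∀ g : Polynomial ℤ,
      g ∣ (∑ i ∈ Finset.range p, (Polynomial.X : Polynomial ℤ) ^ (n * i)) →
      g ∣ (Polynomial.expand ℤ p) (Polynomial.cyclotomic n ℤ) →
        g ∣ Polynomial.cyclotomic (n * p) ℤ := by
  have hexpand := cyclotomic_expand_eq_cyclotomic_mul hp hpn ℤ
  refine ⟨cyclotomic_dvd_geom_sum_X_pow hn hp.one_lt, hexpand ▸ dvd_mul_right _ _,
    fun g hgS hgE => ?_⟩
  have hg : g.IsPrimitive :=
    IsPrimitive.of_dvd (monic_geom_sum_X_pow hn.ne' hp.ne_zero).isPrimitive hgS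
  have hgS_rat : g.map (Int.castRingHom ℚ) ∣ ∑ i ∈ range p, (X : ℚ[X]) ^ (n * i) := by
    simpa only [Polynomial.map_sum, Polynomial.map_pow, map_X] using Polynomial.map_dvd _ hgS
  have hcop : IsCoprime (g.map (Int.castRingHom ℚ)) (cyclotomic n ℚ) :=
    (isCoprime_geom_sum_X_pow_cyclotomic (by exact_mod_cast (Nat.mul_pos hn hp.pos).ne')
      ).of_isCoprime_of_dvd_left hgS_rat
  exact IsPrimitive.Int.dvd_of_dvd_mul_of_isCoprime_map hg (by rwa [map_cyclotomic])
    (hexpand ▸ hgE)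
end

section
/- Let p and q be distinct odd primes, μ the inverse of p modulo q with 1 ≤ μ ≤ q−1, and λ the inverse of q modulo p with 1 ≤ λ ≤ p−1. Then Φ_{pq}(x) = (∑_{i=0}^{μ−1} x^{pi})(∑_{j=0}^{λ−1} x^{qj}) − x(∑_{i=0}^{q−μ−1} x^{pi})(∑_{j=0}^{p−λ−1} x^{qj}). -/
open Polynomial Finset

theorem cyclotomic_pq_formula (p q μ lam : ℕ)
    (hp : p.Prime) (hq : q.Prime) (hpo : Odd p) (hqo : Odd q) (hpq : p ≠ q)
    (hμ1 : 1 ≤ μ) (hμ2 : μ ≤ q - 1) (hlam1 : 1 ≤ lam) (hlam2 : lam ≤ p - 1)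
    (hμ : p * μ ≡ 1 [MOD q]) (hlam : q * lam ≡ 1 [MOD p]) :
    Polynomial.cyclotomic (p * q) ℤ =
      (∑ i ∈ Finset.range μ, (Polynomial.X : Polynomial ℤ) ^ (p * i)) *
        (∑ j ∈ Finset.range lam, (Polynomial.X : Polynomial ℤ) ^ (q * j)) -
      Polynomial.X *
        ((∑ i ∈ Finset.range (q - μ), (Polynomial.X : Polynomial ℤ) ^ (p * i)) *
          (∑ j ∈ Finset.range (p - lam), (Polynomial.X : Polynomial ℤ) ^ (q * j))) := by
  have hfp : Fact p.Prime := ⟨hp⟩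
  have hfq : Fact q.Prime := ⟨hq⟩
  have hp2 : 2 ≤ p := hp.two_le
  have hq2 : 2 ≤ q := hq.two_le
  -- arithmetic: p*μ + q*lam = p*q + 1
  have hub1 : p * μ ≤ p * (q - 1) := Nat.mul_le_mul_left p hμ2
  have hub2 : q * lam ≤ q * (p - 1) := Nat.mul_le_mul_left q hlam2
  have hub1' : p * (q - 1) = p * q - p := by
    rw [Nat.mul_sub, mul_one]
  have hub2' : q * (p - 1) = q * p - q := by
    rw [Nat.mul_sub, mul_one]
  have hlb1 : p ≤ p * μ := Nat.le_mul_of_pos_right p (by omega)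
  have hlb2 : q ≤ q * lam := Nat.le_mul_of_pos_right q (by omega)
  have hqp : q * p = p * q := Nat.mul_comm q p
  have hmodp : p * μ + q * lam ≡ 0 + 1 [MOD p] :=
    Nat.ModEq.add ((Nat.modEq_zero_iff_dvd).2 ⟨μ, rfl⟩) hlam
  have hmodq : p * μ + q * lam ≡ 1 + 0 [MOD q] :=
    Nat.ModEq.add hμ ((Nat.modEq_zero_iff_dvd).2 ⟨lam, rfl⟩)
  have hdp : p ∣ (p * μ + q * lam - 1) :=
    (Nat.modEq_iff_dvd' (by omega)).1 (by simpa using hmodp.symm)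
  have hdq : q ∣ (p * μ + q * lam - 1) :=
    (Nat.modEq_iff_dvd' (by omega)).1 (by simpa using hmodq.symm)
  have hcop : Nat.Coprime p q := (Nat.coprime_primes hp hq).2 hpq
  have hdpq : p * q ∣ (p * μ + q * lam - 1) := hcop.mul_dvd_of_dvd_of_dvd hdp hdq
  have hpqpos : 0 < p * q := by positivity
  have hkey : p * μ + q * lam = p * q + 1 := by
    have h := Nat.eq_of_dvd_of_lt_two_mul (a := p * μ + q * lam - 1) (b := p * q)
      (by omega) hdpq (by omega)
    omega
  have e1 : p * (q - μ) + 1 = q * lam := by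
    rw [Nat.mul_sub]
    omega
  have e2 : q * (p - lam) + 1 = p * μ := by
    rw [Nat.mul_sub, hqp]
    omega
  -- geometric sum identities
  have gp : ∀ n : ℕ, (∑ i ∈ range n, (X : ℤ[X]) ^ (p * i)) * (X ^ p - 1) = X ^ (p * n) - 1 := by
    intro n
    simpa only [pow_mul] using geom_sum_mul ((X : ℤ[X]) ^ p) n
  have gq : ∀ n : ℕ, (∑ i ∈ range n, (X : ℤ[X]) ^ (q * i)) * (X ^ q - 1) = X ^ (q * n) - 1 := by
    intro n
    simpa only [pow_mul] using geom_sum_mul ((X : ℤ[X]) ^ q) n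
  -- cyclotomic (p*q) * cyclotomic q = ∑_{i<q} X^(p*i)
  have hnd : ¬ p ∣ q := fun h => hpq ((Nat.prime_dvd_prime_iff_eq hp hq).1 h)
  have h1 : cyclotomic (p * q) ℤ * cyclotomic q ℤ = ∑ i ∈ range q, (X : ℤ[X]) ^ (p * i) := by
    rw [← hqp, ← cyclotomic_expand_eq_cyclotomic_mul hp hnd ℤ, cyclotomic_prime ℤ q,
      map_sum]
    simp only [map_pow, expand_X, ← pow_mul]
  have hq1 : (X : ℤ[X]) ^ q - 1 = cyclotomic q ℤ * (X - 1) :=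
    (cyclotomic_prime_mul_X_sub_one ℤ q).symm
  -- both sides multiplied by (X^p-1)*(X^q-1)
  have hA : ((X : ℤ[X]) ^ p - 1) * ((X : ℤ[X]) ^ q - 1) ≠ 0 := by
    have h1 : (X : ℤ[X]) ^ p - 1 ≠ 0 := by
      simpa using X_pow_sub_C_ne_zero hp.pos (1 : ℤ)
    have h2 : (X : ℤ[X]) ^ q - 1 ≠ 0 := by
      simpa using X_pow_sub_C_ne_zero hq.pos (1 : ℤ)
    exact mul_ne_zero h1 h2
  apply mul_right_cancel₀ hA
  have hL : cyclotomic (p * q) ℤ * (((X : ℤ[X]) ^ p - 1) * ((X : ℤ[X]) ^ q - 1)) =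
      ((X : ℤ[X]) ^ (p * q) - 1) * (X - 1) := by
    calc cyclotomic (p * q) ℤ * (((X : ℤ[X]) ^ p - 1) * ((X : ℤ[X]) ^ q - 1))
        = (cyclotomic (p * q) ℤ * cyclotomic q ℤ) * ((X : ℤ[X]) ^ p - 1) * (X - 1) := by
          rw [hq1]; ring
      _ = ((X : ℤ[X]) ^ (p * q) - 1) * (X - 1) := by rw [h1, gp q]
  rw [hL]
  have hR : ((∑ i ∈ range μ, (X : ℤ[X]) ^ (p * i)) *
        (∑ j ∈ range lam, (X : ℤ[X]) ^ (q * j)) -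
      X * ((∑ i ∈ range (q - μ), (X : ℤ[X]) ^ (p * i)) *
          (∑ j ∈ range (p - lam), (X : ℤ[X]) ^ (q * j)))) *
      (((X : ℤ[X]) ^ p - 1) * ((X : ℤ[X]) ^ q - 1)) =
      ((X : ℤ[X]) ^ (p * μ) - 1) * ((X : ℤ[X]) ^ (q * lam) - 1) -
        X * (((X : ℤ[X]) ^ (p * (q - μ)) - 1) * ((X : ℤ[X]) ^ (q * (p - lam)) - 1)) := by
    rw [← gp μ, ← gq lam, ← gp (q - μ), ← gq (p - lam)]
    ring
  rw [hR, ← e1, ← e2, show p * q = p * (q - μ) + q * (p - lam) + 1 by omega]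
  ring
end

section
/- For distinct primes p and q, every coefficient of the cyclotomic polynomial Φ_{pq}(x) lies in {−1, 0, 1}; that is, Φ_{pq} is flat. -/
open Polynomial Finset

lemma aux_coeff_G (p q : ℕ) (hp : p.Prime) (hq : q.Prime) (hpq : p ≠ q) (k : ℕ) :
    ((∑ i ∈ range q, (X:ℤ[X]) ^ (p * i)) * (∑ j ∈ range p, (X:ℤ[X]) ^ (q * j))).coeff k = 0 ∨
    ((∑ i ∈ range q, (X:ℤ[X]) ^ (p * i)) * (∑ j ∈ range p, (X:ℤ[X]) ^ (q * j))).coeff k = 1 := by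
  have hG : (∑ i ∈ range q, (X:ℤ[X]) ^ (p * i)) * (∑ j ∈ range p, (X:ℤ[X]) ^ (q * j))
      = ∑ x ∈ range q ×ˢ range p, (X:ℤ[X]) ^ (p * x.1 + q * x.2) := by
    rw [Finset.sum_mul_sum]
    rw [Finset.sum_product]
    simp [pow_add]
  rw [hG, Polynomial.finset_sum_coeff]
  simp only [Polynomial.coeff_X_pow, Finset.sum_boole]
  have hcard : ((range q ×ˢ range p).filter (fun x => k = p * x.1 + q * x.2)).card ≤ 1 := by
    apply Finset.card_le_one.mpr
    intro a ha b hb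
    simp only [Finset.mem_filter, Finset.mem_product, Finset.mem_range] at ha hb
    obtain ⟨⟨ha1, ha2⟩, ha3⟩ := ha
    obtain ⟨⟨hb1, hb2⟩, hb3⟩ := hb
    have heq : p * a.1 + q * a.2 = p * b.1 + q * b.2 := by omega
    have hmod : (q * a.2) % p = (q * b.2) % p := by
      have e : q * a.2 + a.1 * p = q * b.2 + b.1 * p := by
        rw [mul_comm a.1 p, mul_comm b.1 p]; omega
      calc (q * a.2) % p = (q * a.2 + a.1 * p) % p := (Nat.add_mul_mod_self_right _ _ _).symm
        _ = (q * b.2 + b.1 * p) % p := by rw [e]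
        _ = (q * b.2) % p := Nat.add_mul_mod_self_right _ _ _
    have hcop : Nat.gcd p q = 1 := (Nat.coprime_primes hp hq).mpr hpq
    have h2 : a.2 ≡ b.2 [MOD p] := Nat.ModEq.cancel_left_of_coprime hcop hmod
    have h2' : a.2 = b.2 := by
      rwa [Nat.ModEq, Nat.mod_eq_of_lt ha2, Nat.mod_eq_of_lt hb2] at h2
    have h1' : a.1 = b.1 := by
      have hp0 : 0 < p := hp.pos
      nlinarith [heq, h2']
    exact Prod.ext h1' h2'
  interval_cases h : ((range q ×ˢ range p).filter (fun x => k = p * x.1 + q * x.2)).card <;> simp [h]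

lemma aux_key (p q : ℕ) (hp : p.Prime) (hq : q.Prime) (hpq : p ≠ q) :
    Polynomial.cyclotomic (p * q) ℤ * ((X:ℤ[X]) ^ (p*q) - 1) =
      ((X:ℤ[X]) - 1) * ((∑ i ∈ range q, (X:ℤ[X]) ^ (p * i)) * (∑ j ∈ range p, (X:ℤ[X]) ^ (q * j))) := by
  have fp : Fact p.Prime := ⟨hp⟩
  have fq : Fact q.Prime := ⟨hq⟩
  set Φ := Polynomial.cyclotomic (p * q) ℤ with hΦ
  set Sp := (∑ i ∈ range q, (X:ℤ[X]) ^ (p * i)) with hSp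
  set Sq := (∑ j ∈ range p, (X:ℤ[X]) ^ (q * j)) with hSq
  have Sp1 : Sp * ((X:ℤ[X])^p - 1) = (X:ℤ[X])^(p*q) - 1 := by
    have := geom_sum_mul ((X:ℤ[X])^p) q
    simpa [hSp, ← pow_mul, mul_comm] using this
  have Sq1 : Sq * ((X:ℤ[X])^q - 1) = (X:ℤ[X])^(p*q) - 1 := by
    have := geom_sum_mul ((X:ℤ[X])^q) p
    simpa [hSq, ← pow_mul, mul_comm] using this
  have h1 : cyclotomic q ℤ * ((X:ℤ[X]) - 1) = (X:ℤ[X])^q - 1 :=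
    cyclotomic_prime_mul_X_sub_one ℤ q
  have hnd : ¬ p ∣ q := fun h => hpq ((Nat.prime_dvd_prime_iff_eq hp hq).mp h)
  have hexp : (Polynomial.expand ℤ p) (cyclotomic q ℤ) = cyclotomic (q * p) ℤ * cyclotomic q ℤ :=
    cyclotomic_expand_eq_cyclotomic_mul hp hnd ℤ
  have h3 : (X:ℤ[X])^(p*q) - 1 = ((X:ℤ[X])^p - 1) * (Φ * cyclotomic q ℤ) := by
    have := congrArg (Polynomial.expand ℤ p) h1
    simp only [map_mul, map_sub, map_pow, map_one, Polynomial.expand_X, hexp] at this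
    rw [← pow_mul, mul_comm p q] at this
    rw [hΦ, mul_comm p q]
    linear_combination -this
  have key2 : Φ * ((X:ℤ[X])^p - 1) * ((X:ℤ[X])^q - 1) = ((X:ℤ[X])^(p*q) - 1) * ((X:ℤ[X]) - 1) := by
    calc Φ * ((X:ℤ[X])^p - 1) * ((X:ℤ[X])^q - 1)
        = Φ * ((X:ℤ[X])^p - 1) * (cyclotomic q ℤ * ((X:ℤ[X]) - 1)) := by rw [h1]
      _ = (((X:ℤ[X])^p - 1) * (Φ * cyclotomic q ℤ)) * ((X:ℤ[X]) - 1) := by ring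
      _ = ((X:ℤ[X])^(p*q) - 1) * ((X:ℤ[X]) - 1) := by rw [← h3]
  have hne : ((X:ℤ[X])^(p*q) - 1) ≠ 0 := by
    have h0 : 0 < p*q := Nat.mul_pos hp.pos hq.pos
    simpa using Polynomial.X_pow_sub_C_ne_zero h0 (1:ℤ)
  apply mul_right_cancel₀ hne
  calc Φ * ((X:ℤ[X])^(p*q) - 1) * ((X:ℤ[X])^(p*q) - 1)
      = Φ * (Sp * ((X:ℤ[X])^p - 1)) * (Sq * ((X:ℤ[X])^q - 1)) := by rw [Sp1, Sq1]
    _ = Sp * Sq * (Φ * ((X:ℤ[X])^p - 1) * ((X:ℤ[X])^q - 1)) := by ring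
    _ = Sp * Sq * (((X:ℤ[X])^(p*q) - 1) * ((X:ℤ[X]) - 1)) := by rw [key2]
    _ = ((X:ℤ[X]) - 1) * (Sp * Sq) * ((X:ℤ[X])^(p*q) - 1) := by ring

theorem cyclotomic_pq_flat (p q : ℕ) (hp : p.Prime) (hq : q.Prime) (hpq : p ≠ q)
    (k : ℕ) : |(Polynomial.cyclotomic (p * q) ℤ).coeff k| ≤ 1 := by
  by_cases hk : k < p * q
  · set Φ := Polynomial.cyclotomic (p * q) ℤ with hΦ
    set G := (∑ i ∈ range q, (X:ℤ[X]) ^ (p * i)) * (∑ j ∈ range p, (X:ℤ[X]) ^ (q * j)) with hG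
    have key := aux_key p q hp hq hpq
    have key' : Φ * (X:ℤ[X])^(p*q) - Φ = (X:ℤ[X]) * G - G := by
      rw [← hΦ, ← hG] at key; linear_combination key
    have hco := congrArg (fun f => Polynomial.coeff f k) key'
    simp only [Polynomial.coeff_sub] at hco
    have h0 : (Φ * (X:ℤ[X])^(p*q)).coeff k = 0 := by
      rw [Polynomial.coeff_mul_X_pow']
      simp [Nat.not_le.mpr hk]
    rw [h0] at hco
    have hΦk : Φ.coeff k = G.coeff k - ((X:ℤ[X]) * G).coeff k := by linarith
    rcases k with _ | n
    · have hx : ((X:ℤ[X]) * G).coeff 0 = 0 := by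
        rw [Polynomial.mul_coeff_zero, Polynomial.coeff_X_zero, zero_mul]
      rw [hΦk, hx, sub_zero]
      rcases aux_coeff_G p q hp hq hpq 0 with h | h <;> rw [← hG] at h <;> simp [h]
    · have hx : ((X:ℤ[X]) * G).coeff (n + 1) = G.coeff n := Polynomial.coeff_X_mul G n
      rw [hΦk, hx]
      rcases aux_coeff_G p q hp hq hpq (n + 1) with h | h <;>
        rcases aux_coeff_G p q hp hq hpq n with h' | h' <;>
        rw [← hG] at h h' <;> simp [h, h']
  · have hdeg : (Polynomial.cyclotomic (p * q) ℤ).natDegree < k := by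
      rw [Polynomial.natDegree_cyclotomic]
      have h1 : 1 < p * q := Nat.one_lt_mul_iff.mpr ⟨hp.pos, hq.pos, Or.inl hp.one_lt⟩
      have := Nat.totient_lt (p * q) h1
      omega
    rw [Polynomial.coeff_eq_zero_of_natDegree_lt hdeg]
    simp
end

section
/- For distinct primes p and q, the power series Φ_{pq}(x)/(1−x) = (1−x^{pq})/((1−x^p)(1−x^q)) has all coefficients equal to 0 or 1; equivalently, every partial sum ∑_{k=0}^n [x^k]Φ_{pq}(x) of the coefficients of Φ_{pq} is 0 or 1. -/
open Polynomial Finset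

lemma geom_coeff (N j : ℕ) (h : j < N) :
    (∑ i ∈ Finset.range N, (X : ℤ[X]) ^ i).coeff j = 1 := by
  rw [finset_sum_coeff]
  simp only [coeff_X_pow]
  rw [Finset.sum_ite_eq (Finset.range N) j (fun _ => (1:ℤ))]
  simp [h]

lemma coeff_mul_geom (f : ℤ[X]) (N n : ℕ) (h : n < N) :
    (f * ∑ i ∈ Finset.range N, X ^ i).coeff n
      = ∑ k ∈ Finset.range (n + 1), f.coeff k := by
  rw [coeff_mul, Finset.Nat.sum_antidiagonal_eq_sum_range_succ_mk]
  refine Finset.sum_congr rfl fun k hk => ?_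
  rw [geom_coeff N (n - k) (lt_of_le_of_lt (Nat.sub_le _ _) h), mul_one]

theorem cyclotomic_pq_partial_sums (p q : ℕ) (hp : p.Prime) (hq : q.Prime)
    (hpq : p ≠ q) (n : ℕ) :
    (∑ k ∈ Finset.range (n + 1), (Polynomial.cyclotomic (p * q) ℤ).coeff k) = 0 ∨
    (∑ k ∈ Finset.range (n + 1), (Polynomial.cyclotomic (p * q) ℤ).coeff k) = 1 := by
  have hndvd : ¬ p ∣ q := (Nat.Prime.coprime_iff_not_dvd hp).mp
    ((Nat.coprime_primes hp hq).mpr hpq)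
  haveI : Fact q.Prime := ⟨hq⟩
  -- key identity: Φ_{pq} * (∑_{i<q} X^i) = ∑_{i<q} X^{p*i}
  have hkey : cyclotomic (p * q) ℤ * (∑ i ∈ range q, X ^ i)
      = ∑ i ∈ range q, X ^ (p * i) := by
    have h1 := cyclotomic_expand_eq_cyclotomic_mul (n := q) hp hndvd (R := ℤ)
    rw [cyclotomic_prime ℤ q] at h1
    rw [mul_comm q p] at h1
    calc cyclotomic (p * q) ℤ * (∑ i ∈ range q, X ^ i)
        = (expand ℤ p) (∑ i ∈ Finset.range q, X ^ i) := h1.symm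
      _ = ∑ i ∈ range q, X ^ (p * i) := by
          rw [map_sum]
          refine Finset.sum_congr rfl fun i _ => ?_
          rw [map_pow, expand_X, ← pow_mul, mul_comm]
  have hX1 : (X - 1 : ℤ[X]) ≠ 0 := by
    simpa using Polynomial.X_sub_C_ne_zero (1:ℤ)
  have hgeom : (∑ i ∈ range q, (X:ℤ[X]) ^ i) * (∑ j ∈ range (n+1), X ^ (q*j))
      = ∑ i ∈ range (q * (n+1)), X ^ i := by
    apply mul_right_cancel₀ hX1
    have e1 : (∑ j ∈ range (n+1), (X:ℤ[X]) ^ (q*j)) = ∑ j ∈ range (n+1), (X^q) ^ j := by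
      refine Finset.sum_congr rfl fun j _ => by rw [← pow_mul]
    rw [e1]
    calc ((∑ i ∈ range q, (X:ℤ[X])^i) * (∑ j ∈ range (n+1), (X^q)^j)) * (X-1)
        = ((∑ i ∈ range q, (X:ℤ[X])^i) * (X-1)) * (∑ j ∈ range (n+1), (X^q)^j) := by ring
      _ = (X^q - 1) * (∑ j ∈ range (n+1), (X^q)^j) := by rw [geom_sum_mul]
      _ = X^(q*(n+1)) - 1 := by rw [mul_comm, geom_sum_mul, ← pow_mul]
      _ = (∑ i ∈ range (q*(n+1)), (X:ℤ[X])^i) * (X-1) := (geom_sum_mul _ _).symm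
  have hq0 : 0 < q := hq.pos
  have hlt : n < q * (n + 1) := lt_of_lt_of_le (Nat.lt_succ_self n)
    (Nat.le_mul_of_pos_left _ hq0)
  have hS : (∑ k ∈ Finset.range (n + 1), (cyclotomic (p * q) ℤ).coeff k)
      = ((∑ i ∈ range q, (X:ℤ[X]) ^ (p*i)) * (∑ j ∈ range (n+1), X ^ (q*j))).coeff n := by
    rw [← hkey, mul_assoc, hgeom, coeff_mul_geom _ _ _ hlt]
  rw [hS]
  have hprod : (∑ i ∈ range q, (X:ℤ[X]) ^ (p*i)) * (∑ j ∈ range (n+1), X ^ (q*j))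
      = ∑ ij ∈ range q ×ˢ range (n+1), X ^ (p * ij.1 + q * ij.2) := by
    rw [Finset.sum_mul_sum, Finset.sum_product]
    refine Finset.sum_congr rfl fun i _ => Finset.sum_congr rfl fun j _ => ?_
    rw [← pow_add]
  rw [hprod, finset_sum_coeff]
  simp only [coeff_X_pow]
  rw [Finset.sum_boole]
  -- card of the filter is ≤ 1
  have hcard : ((range q ×ˢ range (n+1)).filter (fun x => n = p * x.1 + q * x.2)).card ≤ 1 := by
    rw [Finset.card_le_one]
    intro a ha b hb
    simp only [Finset.mem_filter, Finset.mem_product, Finset.mem_range] at ha hb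
    obtain ⟨⟨ha1, ha2⟩, heqa⟩ := ha
    obtain ⟨⟨hb1, hb2⟩, heqb⟩ := hb
    have heq : p * a.1 + q * a.2 = p * b.1 + q * b.2 := heqa ▸ heqb
    have hpq0 : (p : ZMod q) ≠ 0 := by
      intro h
      exact hndvd (((Nat.prime_dvd_prime_iff_eq hq hp).mp
        ((ZMod.natCast_eq_zero_iff p q).mp h)) ▸ dvd_refl q)
    have h1 : (a.1 : ZMod q) = (b.1 : ZMod q) := by
      have := congrArg (Nat.cast : ℕ → ZMod q) heq
      push_cast at this
      simp only [ZMod.natCast_self, zero_mul, add_zero, zero_add] at this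
      exact mul_left_cancel₀ hpq0 (by linear_combination this)
    have h2 : a.1 = b.1 := by
      have := congrArg ZMod.val h1
      rwa [ZMod.val_cast_of_lt ha1, ZMod.val_cast_of_lt hb1] at this
    have h3 : a.2 = b.2 := by
      rw [h2] at heq
      exact Nat.eq_of_mul_eq_mul_left hq0 (Nat.add_left_cancel heq)
    exact Prod.ext h2 h3
  interval_cases h : ((range q ×ˢ range (n+1)).filter (fun x => n = p * x.1 + q * x.2)).card
  · left; simp [h]
  · right; simp [h]
end

section
/- Let p < q be coprime positive integers and 1 ≤ l ≤ p + q − 1 an integer. Write pq + l = μp + λq with 1 ≤ μ ≤ q and 1 ≤ λ ≤ p. Then (1 + x + … + x^{l−1})·Φ̃_{p,q}(x) = (∑_{i=0}^{μ−1} x^{pi})(∑_{j=0}^{λ−1} x^{qj}) − x^l(∑_{i=0}^{q−μ−1} x^{pi})(∑_{j=0}^{p−λ−1} x^{qj}), where Φ̃_{p,q}(x) = (x^{pq}−1)(x−1)/((x^p−1)(x^q−1)). -/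
open Polynomial Finset

lemma aux_poly_id (x : Polynomial ℤ) (l u v : ℕ) :
    (x ^ l - 1) * (x ^ (u + v + l) - 1) =
      (x ^ (v + l) - 1) * (x ^ (u + l) - 1) -
        x ^ l * ((x ^ u - 1) * (x ^ v - 1)) := by
  simp only [pow_add]
  ring

theorem pseudocyclotomic_pq_mul_geom (p q l μ lam : ℕ)
    (hp : 0 < p) (hpq : p < q) (hcop : Nat.Coprime p q)
    (hl1 : 1 ≤ l) (hl2 : l ≤ p + q - 1)
    (hμ1 : 1 ≤ μ) (hμ2 : μ ≤ q) (hlam1 : 1 ≤ lam) (hlam2 : lam ≤ p)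
    (hrep : p * q + l = μ * p + lam * q)
    (f : Polynomial ℤ)
    (hf : ((Polynomial.X : Polynomial ℤ) ^ p - 1) * (Polynomial.X ^ q - 1) * f =
      (Polynomial.X ^ (p * q) - 1) * (Polynomial.X - 1)) :
    (∑ i ∈ Finset.range l, (Polynomial.X : Polynomial ℤ) ^ i) * f =
      (∑ i ∈ Finset.range μ, (Polynomial.X : Polynomial ℤ) ^ (p * i)) *
        (∑ j ∈ Finset.range lam, (Polynomial.X : Polynomial ℤ) ^ (q * j)) -
      Polynomial.X ^ l *
        ((∑ i ∈ Finset.range (q - μ), (Polynomial.X : Polynomial ℤ) ^ (p * i)) *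
          (∑ j ∈ Finset.range (p - lam), (Polynomial.X : Polynomial ℤ) ^ (q * j))) := by
  have hq : 0 < q := lt_trans hp hpq
  -- exponent arithmetic as natural numbers
  have e1 : p * (q - μ) = p * q - p * μ := Nat.mul_sub_left_distrib p q μ
  have e2 : q * (p - lam) = q * p - q * lam := Nat.mul_sub_left_distrib q p lam
  have hle1 : p * μ ≤ p * q := Nat.mul_le_mul_left p hμ2
  have hle2 : q * lam ≤ q * p := Nat.mul_le_mul_left q hlam2
  have hrep' : p * q + l = p * μ + q * lam := by rw [hrep]; ring
  have hqp : q * p = p * q := Nat.mul_comm q p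
  set A := p * μ with hA
  set B := q * lam with hB
  set N := p * q with hN
  rw [hqp] at e2 hle2
  have f1 : p * (q - μ) + l = B := by omega
  have f2 : q * (p - lam) + l = A := by omega
  have f3 : p * (q - μ) + q * (p - lam) + l = N := by omega
  -- cancel the nonzero factor (X^p - 1)(X^q - 1)
  have hgp : ((X : Polynomial ℤ) ^ p - 1) ≠ 0 := by
    have := (monic_X_pow_sub_C (1 : ℤ) hp.ne').ne_zero
    simpa using this
  have hgq : ((X : Polynomial ℤ) ^ q - 1) ≠ 0 := by
    have := (monic_X_pow_sub_C (1 : ℤ) hq.ne').ne_zero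
    simpa using this
  have hg : ((X : Polynomial ℤ) ^ p - 1) * (X ^ q - 1) ≠ 0 := mul_ne_zero hgp hgq
  apply mul_left_cancel₀ hg
  -- geometric sum identities
  have hS : (∑ i ∈ range l, (X : Polynomial ℤ) ^ i) * (X - 1) = X ^ l - 1 :=
    geom_sum_mul X l
  have hSA : (∑ i ∈ range μ, (X : Polynomial ℤ) ^ (p * i)) * (X ^ p - 1) = X ^ A - 1 := by
    have := geom_sum_mul ((X : Polynomial ℤ) ^ p) μ
    simpa [← pow_mul] using this
  have hSB : (∑ j ∈ range lam, (X : Polynomial ℤ) ^ (q * j)) * (X ^ q - 1) = X ^ B - 1 := by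
    have := geom_sum_mul ((X : Polynomial ℤ) ^ q) lam
    simpa [← pow_mul] using this
  have hSC : (∑ i ∈ range (q - μ), (X : Polynomial ℤ) ^ (p * i)) * (X ^ p - 1) =
      X ^ (p * (q - μ)) - 1 := by
    have := geom_sum_mul ((X : Polynomial ℤ) ^ p) (q - μ)
    simpa [← pow_mul] using this
  have hSD : (∑ j ∈ range (p - lam), (X : Polynomial ℤ) ^ (q * j)) * (X ^ q - 1) =
      X ^ (q * (p - lam)) - 1 := by
    have := geom_sum_mul ((X : Polynomial ℤ) ^ q) (p - lam)
    simpa [← pow_mul] using this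
  have lhs_eq : ((X : Polynomial ℤ) ^ p - 1) * (X ^ q - 1) *
      ((∑ i ∈ range l, (X : Polynomial ℤ) ^ i) * f) = (X ^ l - 1) * (X ^ N - 1) := by
    calc ((X : Polynomial ℤ) ^ p - 1) * (X ^ q - 1) * ((∑ i ∈ range l, (X : Polynomial ℤ) ^ i) * f)
        = (∑ i ∈ range l, (X : Polynomial ℤ) ^ i) * (((X : Polynomial ℤ) ^ p - 1) * (X ^ q - 1) * f) := by ring
      _ = (∑ i ∈ range l, (X : Polynomial ℤ) ^ i) * ((X ^ N - 1) * (X - 1)) := by rw [hf]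
      _ = ((∑ i ∈ range l, (X : Polynomial ℤ) ^ i) * (X - 1)) * (X ^ N - 1) := by ring
      _ = (X ^ l - 1) * (X ^ N - 1) := by rw [hS]
  rw [lhs_eq]
  have rhs_eq : ((X : Polynomial ℤ) ^ p - 1) * (X ^ q - 1) *
      ((∑ i ∈ range μ, (X : Polynomial ℤ) ^ (p * i)) *
        (∑ j ∈ range lam, (X : Polynomial ℤ) ^ (q * j)) -
      X ^ l * ((∑ i ∈ range (q - μ), (X : Polynomial ℤ) ^ (p * i)) *
        (∑ j ∈ range (p - lam), (X : Polynomial ℤ) ^ (q * j)))) =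
      (X ^ A - 1) * (X ^ B - 1) -
        X ^ l * ((X ^ (p * (q - μ)) - 1) * (X ^ (q * (p - lam)) - 1)) := by
    rw [← hSA, ← hSB, ← hSC, ← hSD]; ring
  rw [rhs_eq]
  have hu : A = q * (p - lam) + l := f2.symm
  have hv : B = p * (q - μ) + l := f1.symm
  have hn : N = p * (q - μ) + q * (p - lam) + l := f3.symm
  rw [hu, hv, hn]
  exact aux_poly_id X l (p * (q - μ)) (q * (p - lam))
end

section
/- Let p_1, …, p_k be pairwise coprime positive integers. Then the pseudocyclotomic polynomial satisfies Φ̃_{p_1,…,p_k}(x) = ∏ Φ_{m_1 m_2 ⋯ m_k}(x), where the product is over all tuples (m_1, …, m_k) with m_i ∣ p_i and m_i > 1 for every i. -/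
/-!
Write `Φ̃_S` for the pseudocyclotomic polynomial of `(p i)_{i ∈ S}` and `C_S` for the product of
cyclotomic polynomials on the right. Induct on `S`. Adjoining an index `a` gives
`Φ̃_{S ∪ {a}}(x) = Φ̃_S(x ^ p_a) / Φ̃_S(x)`. On the other side, for `n` coprime to `q` one has
`Φ_n(x ^ q) = ∏_{d ∣ q} Φ_{n d}(x)` (by strong induction on `n`, from `x ^ n - 1 = ∏_{d ∣ n} Φ_d`);
applied to every factor of `C_S` with `q = p_a`, the terms `d = 1` give back `C_S` and the others
are exactly the factors of `C_{S ∪ {a}}`, so `C_S(x ^ p_a) = C_S(x) C_{S ∪ {a}}(x)`.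
-/

open Polynomial Finset

theorem Nat.Coprime.prod_divisors_mul {M : Type*} [CommMonoid M] {m n : ℕ} (hmn : m.Coprime n)
    (g : ℕ → M) :
    ∏ d ∈ (m * n).divisors, g d = ∏ a ∈ m.divisors, ∏ b ∈ n.divisors, g (a * b) := by
  rw [Nat.divisors_mul, Finset.mul_def, prod_image hmn.mul_injOn_divisors, prod_product]

theorem Nat.prod_divisors_eq_mul_prod_one_lt {M : Type*} [CommMonoid M] {n : ℕ} (hn : n ≠ 0)
    (g : ℕ → M) :
    ∏ d ∈ n.divisors, g d = g 1 * ∏ d ∈ n.divisors with 1 < d, g d := by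
  have hone : n.divisors.filter (¬ 1 < ·) = {1} := by
    ext d
    simp only [mem_filter, Nat.mem_divisors, mem_singleton, not_lt]
    constructor
    · rintro ⟨⟨hd, -⟩, hle⟩
      interval_cases d <;> simp_all
    · rintro rfl
      exact ⟨⟨one_dvd n, hn⟩, le_rfl⟩
  rw [← prod_filter_not_mul_prod_filter n.divisors (1 < ·), hone, prod_singleton]

namespace Polynomial

theorem expand_cyclotomic_of_coprime {R : Type*} [CommRing R] [IsDomain R] {n q : ℕ}
    (hn : 0 < n) (hq : 0 < q) (hnq : n.Coprime q) :
    expand R q (cyclotomic n R) = ∏ d ∈ q.divisors, cyclotomic (n * d) R := by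
  induction n using Nat.strong_induction_on with
  | _ n ih =>
  have hdiv : ∏ m ∈ n.divisors, expand R q (cyclotomic m R)
      = ∏ m ∈ n.divisors, ∏ d ∈ q.divisors, cyclotomic (m * d) R := by
    rw [← map_prod, prod_cyclotomic_eq_X_pow_sub_one hn, map_sub, map_one, map_pow, expand_X,
      ← pow_mul, mul_comm q n, ← prod_cyclotomic_eq_X_pow_sub_one (Nat.mul_pos hn hq),
      hnq.prod_divisors_mul]
  have hproper : ∏ m ∈ n.properDivisors, expand R q (cyclotomic m R)
      = ∏ m ∈ n.properDivisors, ∏ d ∈ q.divisors, cyclotomic (m * d) R :=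
    prod_congr rfl fun m hm => by
      obtain ⟨hmn, hlt⟩ := Nat.mem_properDivisors.mp hm
      exact ih m hlt (Nat.pos_of_dvd_of_pos hmn hn) (hnq.coprime_dvd_left hmn)
  rw [← Nat.cons_self_properDivisors hn.ne', prod_cons, prod_cons, hproper] at hdiv
  exact mul_right_cancel₀ (prod_ne_zero_iff.mpr fun m _ =>
    prod_ne_zero_iff.mpr fun d _ => cyclotomic_ne_zero _ R) hdiv

end Polynomial

namespace Finset

variable {ι M : Type*} [DecidableEq ι] [CommMonoid M] {s : Finset ι} {a : ι}

theorem prod_pi_insert {δ : ι → Type*} [∀ i, DecidableEq (δ i)] (ha : a ∉ s)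
    (t : ∀ i, Finset (δ i)) (g : (∀ i ∈ insert a s, δ i) → M) :
    ∏ f ∈ (insert a s).pi t, g f = ∏ b ∈ t a, ∏ f ∈ s.pi t, g (Pi.cons s a b f) := by
  have hdisj : (t a : Set (δ a)).PairwiseDisjoint fun b => (s.pi t).image (Pi.cons s a b) := by
    intro b _ b' _ hbb'
    simp only [Function.onFun, disjoint_iff_ne, mem_image]
    rintro _ ⟨f, -, rfl⟩ _ ⟨f', -, rfl⟩ h
    exact hbb' (by simpa only [Pi.cons_same] using congr_fun₂ h a (mem_insert_self a s))
  rw [pi_insert ha, prod_biUnion hdisj]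
  exact prod_congr rfl fun b _ => prod_image fun f _ f' _ h => Pi.cons_injective ha h

theorem prod_attach_insert_pi_cons (ha : a ∉ s) (b : M) (f : ∀ i ∈ s, M) :
    ∏ i ∈ (insert a s).attach, Pi.cons s a b f i.1 i.2 = b * ∏ i ∈ s.attach, f i.1 i.2 := by
  rw [attach_insert, prod_insert, prod_image, Pi.cons_same]
  · congr 1
    exact prod_congr rfl fun i _ => Pi.cons_ne fun h => ha (by rw [h]; exact i.2)
  · exact fun _ _ _ _ h => Subtype.ext (Subtype.mk.inj h)
  · simpa using ha

end Finset

variable {ι : Type*}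

/-- `Φ̃` of `p` restricted to `s` is `pseudocyclotomicPart s p 0 / pseudocyclotomicPart s p 1`. -/
noncomputable def pseudocyclotomicPart (s : Finset ι) (p : ι → ℕ) (r : ℕ) : ℤ[X] :=
  ∏ I ∈ s.powerset with (#s - #I) % 2 = r, (X ^ ∏ i ∈ I, p i - 1)

theorem pseudocyclotomicPart_insert [DecidableEq ι] {s : Finset ι} {a : ι} (ha : a ∉ s)
    (p : ι → ℕ) {r : ℕ} (hr : r < 2) :
    pseudocyclotomicPart (insert a s) p r =
      pseudocyclotomicPart s p (1 - r) * expand ℤ (p a) (pseudocyclotomicPart s p r) := by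
  simp only [pseudocyclotomicPart, map_prod, prod_filter, prod_powerset_insert ha]
  congr 1 <;> refine prod_congr rfl fun I hI => ?_
  · have := card_le_card (mem_powerset.mp hI)
    rw [card_insert_of_notMem ha]
    exact if_congr (by omega) rfl rfl
  · have haI : a ∉ I := fun h => ha (mem_powerset.mp hI h)
    rw [card_insert_of_notMem ha, card_insert_of_notMem haI, Nat.add_sub_add_right,
      prod_insert haI, apply_ite (expand ℤ (p a)), map_one, map_sub, map_one, map_pow, expand_X,
      ← pow_mul]

theorem pseudocyclotomicPart_ne_zero (s : Finset ι) {p : ι → ℕ} (hp : ∀ i ∈ s, 0 < p i)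
    (r : ℕ) : pseudocyclotomicPart s p r ≠ 0 :=
  prod_ne_zero_iff.mpr fun I hI => by
    have hI : ∀ i ∈ I, 0 < p i := fun i hi => hp i (mem_powerset.mp (mem_filter.mp hI).1 hi)
    simpa using X_pow_sub_C_ne_zero (prod_pos hI) (1 : ℤ)

noncomputable def cyclotomicTupleProd [DecidableEq ι] (s : Finset ι) (p : ι → ℕ) : ℤ[X] :=
  ∏ m ∈ s.pi fun i => (p i).divisors.filter (1 < ·), cyclotomic (∏ i ∈ s.attach, m i.1 i.2) ℤ

theorem expand_cyclotomicTupleProd [DecidableEq ι] {s : Finset ι} {a : ι} (ha : a ∉ s)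
    {p : ι → ℕ} (hpa : 0 < p a) (hcop : (∏ i ∈ s, p i).Coprime (p a)) :
    expand ℤ (p a) (cyclotomicTupleProd s p) =
      cyclotomicTupleProd s p * cyclotomicTupleProd (insert a s) p := by
  have hterm : ∀ m ∈ s.pi fun i => (p i).divisors.filter (1 < ·),
      expand ℤ (p a) (cyclotomic (∏ i ∈ s.attach, m i.1 i.2) ℤ) =
        cyclotomic (∏ i ∈ s.attach, m i.1 i.2) ℤ *
          ∏ b ∈ (p a).divisors.filter (1 < ·),
            cyclotomic ((∏ i ∈ s.attach, m i.1 i.2) * b) ℤ := by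
    intro m hm
    have hmi : ∀ i (hi : i ∈ s), m i hi ∣ p i ∧ 1 < m i hi := fun i hi => by
      have := mem_filter.mp (mem_pi.mp hm i hi)
      exact ⟨Nat.dvd_of_mem_divisors this.1, this.2⟩
    have hdvd : ∏ i ∈ s.attach, m i.1 i.2 ∣ ∏ i ∈ s, p i := by
      rw [← prod_attach s p]
      exact prod_dvd_prod_of_dvd _ _ fun i _ => (hmi i.1 i.2).1
    have hpos : 0 < ∏ i ∈ s.attach, m i.1 i.2 :=
      prod_pos fun i _ => zero_lt_one.trans (hmi i.1 i.2).2
    rw [expand_cyclotomic_of_coprime hpos hpa (hcop.coprime_dvd_left hdvd),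
      Nat.prod_divisors_eq_mul_prod_one_lt hpa.ne', mul_one]
  rw [cyclotomicTupleProd, map_prod, prod_congr rfl hterm, prod_mul_distrib, cyclotomicTupleProd,
    prod_pi_insert ha, prod_comm]
  congr 1
  exact prod_congr rfl fun b _ => prod_congr rfl fun m _ => by
    rw [prod_attach_insert_pi_cons ha, mul_comm b]

theorem pseudocyclotomicPart_one_mul_cyclotomicTupleProd [DecidableEq ι] (s : Finset ι)
    {p : ι → ℕ} (hp : ∀ i ∈ s, 0 < p i)
    (hcop : (s : Set ι).Pairwise fun i j => (p i).Coprime (p j)) :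
    pseudocyclotomicPart s p 1 * cyclotomicTupleProd s p = pseudocyclotomicPart s p 0 := by
  induction s using Finset.induction with
  | empty => simp [pseudocyclotomicPart, cyclotomicTupleProd, cyclotomic_one]
  | insert a s ha ih =>
    have ih' := ih (fun i hi => hp i (mem_insert_of_mem hi)) (hcop.mono (by simp))
    have hcopa : (∏ i ∈ s, p i).Coprime (p a) := Nat.Coprime.prod_left fun i hi =>
      hcop (mem_insert_of_mem hi) (mem_insert_self a s) fun h => ha (h ▸ hi)
    calc pseudocyclotomicPart (insert a s) p 1 * cyclotomicTupleProd (insert a s) p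
        = pseudocyclotomicPart s p 1 * expand ℤ (p a) (pseudocyclotomicPart s p 1) *
            (cyclotomicTupleProd s p * cyclotomicTupleProd (insert a s) p) := by
          rw [pseudocyclotomicPart_insert ha p one_lt_two, Nat.sub_self, ← ih']
          ring
      _ = pseudocyclotomicPart s p 1 * expand ℤ (p a) (pseudocyclotomicPart s p 0) := by
          rw [← expand_cyclotomicTupleProd ha (hp a (mem_insert_self a s)) hcopa, mul_assoc,
            ← map_mul, ih']
      _ = pseudocyclotomicPart (insert a s) p 0 :=
          (pseudocyclotomicPart_insert ha p zero_lt_two).symm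

theorem pseudocyclotomic_eq_prod_cyclotomic (k : ℕ) (p : Fin k → ℕ)
    (hp : ∀ i, 0 < p i)
    (hcop : ∀ i j, i ≠ j → Nat.Coprime (p i) (p j))
    (f : Polynomial ℤ)
    (hf : (∏ I ∈ (Finset.univ : Finset (Fin k)).powerset.filter
              (fun I => (k - I.card) % 2 = 1),
            ((Polynomial.X : Polynomial ℤ) ^ (∏ i ∈ I, p i) - 1)) * f =
          ∏ I ∈ (Finset.univ : Finset (Fin k)).powerset.filter
              (fun I => (k - I.card) % 2 = 0),
            ((Polynomial.X : Polynomial ℤ) ^ (∏ i ∈ I, p i) - 1)) :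
    f = ∏ m ∈ Finset.univ.pi (fun i : Fin k => (p i).divisors.filter (fun d => 1 < d)),
          Polynomial.cyclotomic (∏ i : Fin k, m i (Finset.mem_univ i)) ℤ := by
  have hp' : ∀ i ∈ univ, 0 < p i := fun i _ => hp i
  have key := pseudocyclotomicPart_one_mul_cyclotomicTupleProd univ hp' fun i _ j _ => hcop i j
  have hpart : ∀ r, pseudocyclotomicPart univ p r =
      ∏ I ∈ univ.powerset.filter (fun I => (k - I.card) % 2 = r), (X ^ (∏ i ∈ I, p i) - 1) := by
    simp [pseudocyclotomicPart]
  have htuple : cyclotomicTupleProd univ p =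
      ∏ m ∈ univ.pi (fun i : Fin k => (p i).divisors.filter (fun d => 1 < d)),
        cyclotomic (∏ i : Fin k, m i (mem_univ i)) ℤ :=
    prod_congr rfl fun m _ => by rw [prod_attach univ fun i => m i (mem_univ i)]
  have hne := pseudocyclotomicPart_ne_zero univ hp' 1
  rw [hpart] at hne
  rw [hpart, hpart, htuple] at key
  exact mul_left_cancel₀ hne (hf.trans key.symm)
end

section
/- Let p_1, …, p_k be pairwise coprime positive integers with product n. Then Φ̃_{p_1,…,p_k}(x) is the greatest common divisor in ℤ[x] of the polynomials 1 + x^{n/p_i} + x^{2n/p_i} + … + x^{n(p_i−1)/p_i} for i = 1, …, k. -/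
open Finset Polynomial Function

/-!
Everything is a product of cyclotomic polynomials `Φ_d` with `d ∣ n`, because
`X ^ q - 1 = ∏_{d ∣ q} Φ_d`. For pairwise coprime `p_i`, a divisor `d` of `n` divides
`∏_{i ∈ I} p_i` exactly when `I` contains the set `S_d` of indices `i` with `gcd(d, p_i) ≠ 1`, so
the exponent of `Φ_d` in the pseudocyclotomic polynomial is the alternating count of the supersets
of `S_d`, which is `1` if `S_d` is everything and `0` otherwise. The `i`-th geometric sum is
`(X ^ n - 1) / (X ^ (n / p_i) - 1)`, the product of the `Φ_d` with `i ∈ S_d`. Distinct cyclotomic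
polynomials are coprime in `ℚ[X]`, so by Gauss's lemma a common divisor in `ℤ[X]` of such products
divides the product over the intersection of the index sets.
-/

theorem card_powerset_filter_even_card {α : Type*} [DecidableEq α] (T : Finset α) :
    #{J ∈ T.powerset | #J % 2 = 0} = #{J ∈ T.powerset | #J % 2 = 1} + if T = ∅ then 1 else 0 := by
  have h := sum_powerset_neg_one_pow_card (x := T)
  rw [← sum_filter_add_sum_filter_not _ fun J => #J % 2 = 0,
    sum_congr rfl fun J hJ => (Nat.even_iff.2 (mem_filter.1 hJ).2).neg_one_pow,
    sum_congr rfl fun J hJ =>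
      (Nat.odd_iff.2 (Nat.mod_two_ne_zero.1 (mem_filter.1 hJ).2)).neg_one_pow]
    at h
  simp only [sum_const, nsmul_eq_mul, mul_one, mul_neg, Nat.mod_two_ne_zero] at h
  split_ifs at h ⊢ <;> omega

theorem card_filter_superset_parity {ι : Type*} [Fintype ι] [DecidableEq ι] (S : Finset ι) :
    #{I ∈ (univ : Finset ι).powerset.filter (fun I => (Fintype.card ι - #I) % 2 = 0) | S ⊆ I} =
      #{I ∈ (univ : Finset ι).powerset.filter (fun I => (Fintype.card ι - #I) % 2 = 1) | S ⊆ I} +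
        if S = univ then 1 else 0 := by
  have compl_bij : ∀ b, #{I ∈ (univ : Finset ι).powerset.filter
      (fun I => (Fintype.card ι - #I) % 2 = b) | S ⊆ I} = #{J ∈ Sᶜ.powerset | #J % 2 = b} := by
    intro b
    refine card_nbij' compl compl (fun I hI => ?_) (fun J hJ => ?_) (fun I _ => compl_compl I)
      (fun J _ => compl_compl J)
    · simp_all [card_compl]
    · have := card_le_univ J
      simp_all [card_compl, Nat.sub_sub_self this, subset_compl_comm]
  simp only [compl_bij, card_powerset_filter_even_card, compl_eq_empty_iff]

theorem dvd_prod_iff_forall_notMem_coprime {ι : Type*} [Fintype ι] {p : ι → ℕ}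
    (hp : Pairwise (Nat.Coprime on p)) {d : ℕ} (hd : d ∣ ∏ i, p i) (I : Finset ι) :
    d ∣ ∏ i ∈ I, p i ↔ ∀ i ∉ I, d.Coprime (p i) := by
  classical
  constructor
  · intro h i hi
    exact Nat.Coprime.coprime_dvd_left h
      (Nat.Coprime.prod_left fun j hj => hp (ne_of_mem_of_not_mem hj hi))
  · intro h
    have hcompl : d.Coprime (∏ i ∈ Iᶜ, p i) :=
      Nat.Coprime.prod_right fun i hi => h i (mem_compl.1 hi)
    exact hcompl.dvd_of_dvd_mul_left (by rwa [prod_compl_mul_prod])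

section Cyclotomic

variable {R : Type*} [CommRing R]

theorem X_pow_sub_one_eq_prod_cyclotomic_filter_dvd {n q : ℕ} (hn : n ≠ 0) (hq : q ∣ n) :
    (X : R[X]) ^ q - 1 = ∏ d ∈ n.divisors with d ∣ q, cyclotomic d R := by
  rw [Nat.divisors_filter_dvd_of_dvd hn hq,
    prod_cyclotomic_eq_X_pow_sub_one (Nat.pos_of_ne_zero (ne_zero_of_dvd_ne_zero hn hq))]

theorem prod_X_pow_sub_one_eq_prod_cyclotomic_pow {β : Type*} (F : Finset β) (q : β → ℕ) {n : ℕ}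
    (hn : n ≠ 0) (hq : ∀ x ∈ F, q x ∣ n) :
    ∏ x ∈ F, ((X : R[X]) ^ q x - 1) = ∏ d ∈ n.divisors, cyclotomic d R ^ #{x ∈ F | d ∣ q x} := by
  rw [prod_congr rfl fun x hx => X_pow_sub_one_eq_prod_cyclotomic_filter_dvd hn (hq x hx)]
  simp_rw [prod_filter]
  rw [prod_comm]
  refine prod_congr rfl fun d _ => ?_
  rw [← prod_filter, prod_const]

theorem sum_range_X_pow_mul_eq_prod_cyclotomic {m q : ℕ} (hm : m ≠ 0) (hq : q ≠ 0) :
    ∑ j ∈ range q, (X : R[X]) ^ (j * m) = ∏ d ∈ (m * q).divisors \ m.divisors, cyclotomic d R := by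
  have hsub : m.divisors ⊆ (m * q).divisors :=
    Nat.divisors_subset_of_dvd (mul_ne_zero hm hq) (dvd_mul_right m q)
  apply (monic_X_pow_sub_C (1 : R) hm).isRegular.left
  simp only [map_one]
  calc (X ^ m - 1) * ∑ j ∈ range q, (X : R[X]) ^ (j * m)
      = (X ^ m - 1) * ∑ j ∈ range q, ((X : R[X]) ^ m) ^ j := by simp_rw [← pow_mul']
    _ = X ^ (m * q) - 1 := by rw [mul_geom_sum, ← pow_mul]
    _ = (X ^ m - 1) * ∏ d ∈ (m * q).divisors \ m.divisors, cyclotomic d R := by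
      rw [← prod_cyclotomic_eq_X_pow_sub_one (Nat.pos_of_ne_zero (mul_ne_zero hm hq)),
        ← prod_sdiff hsub, prod_cyclotomic_eq_X_pow_sub_one (Nat.pos_of_ne_zero hm), mul_comm]

theorem sum_range_X_pow_mul_prod_div_eq_prod_cyclotomic {ι : Type*} [Fintype ι] [DecidableEq ι]
    {p : ι → ℕ} (hp : ∀ i, 0 < p i) (hcop : Pairwise (Nat.Coprime on p)) (i : ι) :
    ∑ j ∈ range (p i), (X : R[X]) ^ (j * ((∏ i, p i) / p i)) =
      ∏ d ∈ (∏ i, p i).divisors with ¬ d.Coprime (p i), cyclotomic d R := by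
  have hm : (∏ i, p i) / p i = ∏ j ∈ univ.erase i, p j := by
    rw [← prod_erase_mul _ _ (mem_univ i), Nat.mul_div_cancel _ (hp i)]
  have hn : (∏ j ∈ univ.erase i, p j) * p i = ∏ i, p i := prod_erase_mul _ _ (mem_univ i)
  rw [hm, sum_range_X_pow_mul_eq_prod_cyclotomic (prod_ne_zero_iff.2 fun j _ => (hp j).ne')
    (hp i).ne', hn]
  congr 1
  ext d
  simp only [mem_sdiff, mem_filter, and_congr_right_iff]
  intro hd
  rw [Nat.mem_divisors, dvd_prod_iff_forall_notMem_coprime hcop (Nat.dvd_of_mem_divisors hd)]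
  simp [prod_ne_zero_iff, (hp _).ne']

theorem eq_prod_cyclotomic_of_mul_eq {k : ℕ} {p : Fin k → ℕ}
    (hp : ∀ i, 0 < p i) (hcop : Pairwise (Nat.Coprime on p)) {f : R[X]}
    (hf : (∏ I ∈ (univ : Finset (Fin k)).powerset.filter (fun I => (k - #I) % 2 = 1),
            ((X : R[X]) ^ (∏ i ∈ I, p i) - 1)) * f =
          ∏ I ∈ (univ : Finset (Fin k)).powerset.filter (fun I => (k - #I) % 2 = 0),
            ((X : R[X]) ^ (∏ i ∈ I, p i) - 1)) :
    f = ∏ d ∈ (∏ i, p i).divisors with ∀ i, ¬ d.Coprime (p i), cyclotomic d R := by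
  have hn : ∏ i, p i ≠ 0 := prod_ne_zero_iff.2 fun i _ => (hp i).ne'
  have hqn : ∀ I : Finset (Fin k), ∏ i ∈ I, p i ∣ ∏ i, p i :=
    fun I => prod_dvd_prod_of_subset _ _ _ (subset_univ I)
  have hcount : ∀ d ∈ (∏ i, p i).divisors,
      #{I ∈ (univ : Finset (Fin k)).powerset.filter (fun I => (k - #I) % 2 = 0) |
          d ∣ ∏ i ∈ I, p i} =
        #{I ∈ (univ : Finset (Fin k)).powerset.filter (fun I => (k - #I) % 2 = 1) |
          d ∣ ∏ i ∈ I, p i} + if ∀ i, ¬ d.Coprime (p i) then 1 else 0 := by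
    intro d hd
    have hsupp : ∀ I, d ∣ ∏ i ∈ I, p i ↔ univ.filter (fun i => ¬ d.Coprime (p i)) ⊆ I := by
      intro I
      rw [dvd_prod_iff_forall_notMem_coprime hcop (Nat.dvd_of_mem_divisors hd)]
      simp only [subset_iff, mem_filter, mem_univ, true_and]
      exact forall_congr' fun i => not_imp_comm
    have := card_filter_superset_parity (univ.filter fun i => ¬ d.Coprime (p i) : Finset (Fin k))
    simp only [Fintype.card_fin] at this
    simp only [hsupp, this, eq_univ_iff_forall, mem_filter, mem_univ, true_and]
  apply (monic_prod_of_monic _ _ fun I _ => monic_X_pow_sub_C (1 : R)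
    (prod_ne_zero_iff.2 fun i _ => (hp i).ne')).isRegular.left
  simp only [map_one]
  rw [hf, prod_X_pow_sub_one_eq_prod_cyclotomic_pow _ _ hn fun I _ => hqn I,
    prod_X_pow_sub_one_eq_prod_cyclotomic_pow _ _ hn fun I _ => hqn I,
    prod_congr rfl fun d hd => by rw [hcount d hd, pow_add], prod_mul_distrib, prod_filter]
  congr 1
  refine prod_congr rfl fun d _ => ?_
  split_ifs <;> simp

end Cyclotomic

theorem dvd_prod_cyclotomic_inter_rat {g : ℚ[X]} {A B : Finset ℕ}
    (hA : g ∣ ∏ d ∈ A, cyclotomic d ℚ) (hB : g ∣ ∏ d ∈ B, cyclotomic d ℚ) :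
    g ∣ ∏ d ∈ A ∩ B, cyclotomic d ℚ := by
  obtain ⟨u, v, huv⟩ : IsCoprime (∏ d ∈ A \ B, cyclotomic d ℚ) (∏ d ∈ B \ A, cyclotomic d ℚ) :=
    IsCoprime.prod_left fun d hd => IsCoprime.prod_right fun e he =>
      cyclotomic.isCoprime_rat fun hde => (mem_sdiff.1 hd).2 (hde ▸ (mem_sdiff.1 he).1)
  rw [← prod_inter_mul_prod_sdiff A B] at hA
  rw [← prod_inter_mul_prod_sdiff B A, inter_comm] at hB
  calc g ∣ u * ((∏ d ∈ A ∩ B, cyclotomic d ℚ) * ∏ d ∈ A \ B, cyclotomic d ℚ) +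
        v * ((∏ d ∈ A ∩ B, cyclotomic d ℚ) * ∏ d ∈ B \ A, cyclotomic d ℚ) :=
        dvd_add (dvd_mul_of_dvd_right hA u) (dvd_mul_of_dvd_right hB v)
    _ = ∏ d ∈ A ∩ B, cyclotomic d ℚ := by linear_combination (∏ d ∈ A ∩ B, cyclotomic d ℚ) * huv

theorem dvd_prod_cyclotomic_inter {g : ℤ[X]} {A B : Finset ℕ}
    (hA : g ∣ ∏ d ∈ A, cyclotomic d ℤ) (hB : g ∣ ∏ d ∈ B, cyclotomic d ℤ) :
    g ∣ ∏ d ∈ A ∩ B, cyclotomic d ℤ := by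
  have hprim : g.IsPrimitive :=
    isPrimitive_of_dvd (monic_prod_of_monic _ _ fun d _ => cyclotomic.monic d ℤ).isPrimitive hA
  simp only [IsPrimitive.Int.dvd_iff_map_cast_dvd_map_cast _ _ hprim, Polynomial.map_prod,
    map_cyclotomic] at hA hB ⊢
  exact dvd_prod_cyclotomic_inter_rat hA hB

theorem dvd_prod_cyclotomic_filter_forall {ι : Type*} [Fintype ι] [Nonempty ι] {g : ℤ[X]}
    (U : Finset ℕ) (P : ι → ℕ → Prop) [∀ i, DecidablePred (P i)]
    [DecidablePred fun d => ∀ i, P i d] (h : ∀ i, g ∣ ∏ d ∈ U with P i d, cyclotomic d ℤ) :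
    g ∣ ∏ d ∈ U with ∀ i, P i d, cyclotomic d ℤ := by
  classical
  suffices ∀ s : Finset ι, g ∣ ∏ d ∈ U with ∀ i ∈ s, P i d, cyclotomic d ℤ by
    simpa using this univ
  intro s
  induction s using Finset.induction_on with
  | empty =>
    obtain ⟨i⟩ := ‹Nonempty ι›
    simpa using (h i).trans (prod_dvd_prod_of_subset _ _ _ (filter_subset _ U))
  | insert a s _ ih =>
    have hinter : {d ∈ U | ∀ i ∈ insert a s, P i d} =
        {d ∈ U | ∀ i ∈ s, P i d} ∩ {d ∈ U | P a d} := by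
      ext d; simp only [mem_filter, mem_inter, forall_mem_insert]; tauto
    rw [hinter]
    exact dvd_prod_cyclotomic_inter ih (h a)

theorem pseudocyclotomic_is_gcd (k : ℕ) (hk : 0 < k) (p : Fin k → ℕ)
    (hp : ∀ i, 0 < p i)
    (hcop : ∀ i j, i ≠ j → Nat.Coprime (p i) (p j))
    (n : ℕ) (hn : n = ∏ i, p i)
    (f : Polynomial ℤ)
    (hf : (∏ I ∈ (Finset.univ : Finset (Fin k)).powerset.filter
              (fun I => (k - I.card) % 2 = 1),
            ((Polynomial.X : Polynomial ℤ) ^ (∏ i ∈ I, p i) - 1)) * f =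
          ∏ I ∈ (Finset.univ : Finset (Fin k)).powerset.filter
              (fun I => (k - I.card) % 2 = 0),
            ((Polynomial.X : Polynomial ℤ) ^ (∏ i ∈ I, p i) - 1)) :
    (∀ i, f ∣ ∑ j ∈ Finset.range (p i), (Polynomial.X : Polynomial ℤ) ^ (j * (n / p i))) ∧
    ∀ g : Polynomial ℤ,
      (∀ i, g ∣ ∑ j ∈ Finset.range (p i), (Polynomial.X : Polynomial ℤ) ^ (j * (n / p i))) →
        g ∣ f := by
  subst hn
  have hcop' : Pairwise (Nat.Coprime on p) := fun i j => hcop i j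
  have : Nonempty (Fin k) := ⟨⟨0, hk⟩⟩
  simp only [sum_range_X_pow_mul_prod_div_eq_prod_cyclotomic hp hcop',
    eq_prod_cyclotomic_of_mul_eq hp hcop' hf]
  exact ⟨fun i => prod_dvd_prod_of_subset _ _ _ (monotone_filter_right _ fun _ _ h => h i),
    fun g hg => dvd_prod_cyclotomic_filter_forall _ _ hg⟩
end

section
/- Let n be a positive integer and let s, t be primes with n < s < t and s ≡ t (mod n). Then the set of coefficients of Φ_{ns}(x) equals the set of coefficients of Φ_{nt}(x). -/
/-!
For a prime `p ∤ n` we have `Φ_{np}(x) (xⁿ - 1) = Φ_n(xᵖ) R(x)` with `R = (xⁿ - 1) / Φ_n`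
of degree `< n`. In `ℤ⟦x⟧` this gives `Φ_{np} = -Φ_n(xᵖ) · R(x) / (1 - xⁿ)`, and
`R / (1 - xⁿ)` has the `n`-periodic coefficient sequence `k ↦ R_{k mod n}`. Hence the
coefficient of `Φ_{np}` at `u p + v` (`v < p`) is `-∑_{i + j = u} (Φ_n)_i R_{(j p + v) mod n}`,
which depends on `p` only through `p mod n` and on `v` only through `v mod n`. As `p > n`,
every residue `v mod n` occurs, so the set of coefficients is determined by `p mod n`.
-/

open Polynomial Finset

namespace Polynomial

variable {R : Type*} [CommRing R]

noncomputable def cyclotomicCofactor (n : ℕ) (R : Type*) [CommRing R] : R[X] :=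
  ∏ d ∈ n.properDivisors, cyclotomic d R

theorem cyclotomic_mul_cyclotomicCofactor {n : ℕ} (hn : 0 < n) :
    cyclotomic n R * cyclotomicCofactor n R = X ^ n - 1 := by
  rw [cyclotomicCofactor, ← prod_cyclotomic_eq_X_pow_sub_one hn,
    ← Nat.cons_self_properDivisors hn.ne', prod_cons]

theorem natDegree_cyclotomicCofactor_lt {n : ℕ} (hn : 0 < n) :
    (cyclotomicCofactor n R).natDegree < n := by
  have hsum : ∑ d ∈ n.properDivisors, d.totient + n.totient = n := by
    conv_rhs =>
      rw [← Nat.sum_totient n, ← Nat.cons_self_properDivisors hn.ne', sum_cons, add_comm]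
  calc (cyclotomicCofactor n R).natDegree
      ≤ ∑ d ∈ n.properDivisors, (cyclotomic d R).natDegree := natDegree_prod_le _ _
    _ ≤ ∑ d ∈ n.properDivisors, d.totient := sum_le_sum fun _ _ => natDegree_cyclotomic_le
    _ < n := by have := Nat.totient_pos.mpr hn; omega

theorem cyclotomic_mul_prime_mul_X_pow_sub_one {n p : ℕ} (hn : 0 < n) (hp : p.Prime)
    (hpn : ¬p ∣ n) :
    cyclotomic (n * p) R * (X ^ n - 1) = expand R p (cyclotomic n R) * cyclotomicCofactor n R := by
  rw [cyclotomic_expand_eq_cyclotomic_mul hp hpn, mul_assoc, cyclotomic_mul_cyclotomicCofactor hn]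

theorem coeff_eq_neg_sum_of_mul_X_pow_sub_one {f g P : R[X]} {n : ℕ} (hP : P.natDegree < n)
    (h : f * (X ^ n - 1) = g * P) (m : ℕ) :
    f.coeff m = -∑ x ∈ antidiagonal m, g.coeff x.1 * P.coeff (x.2 % n) := by
  set Q : PowerSeries R := PowerSeries.mk fun k => P.coeff (k % n)
  have hQ : Q * (1 - PowerSeries.X ^ n) = (P : PowerSeries R) := by
    ext k
    rw [mul_sub, mul_one, map_sub, PowerSeries.coeff_mul_X_pow', Polynomial.coeff_coe,
      PowerSeries.coeff_mk]
    split_ifs with hk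
    · rw [PowerSeries.coeff_mk, ← Nat.mod_eq_sub_mod hk, sub_self,
        coeff_eq_zero_of_natDegree_lt (by omega)]
    · rw [Nat.mod_eq_of_lt (by omega), sub_zero]
  have hunit : IsUnit (1 - PowerSeries.X ^ n : PowerSeries R) :=
    PowerSeries.isUnit_iff_constantCoeff.mpr (by simp [(Nat.zero_lt_of_lt hP).ne'])
  have h' : (f : PowerSeries R) * (PowerSeries.X ^ n - 1) =
      (g : PowerSeries R) * (P : PowerSeries R) := by
    simpa only [coe_mul, coe_sub, coe_pow, coe_X, coe_one] using
      congrArg (fun q : R[X] => (q : PowerSeries R)) h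
  have hf : (f : PowerSeries R) = -(g * Q) :=
    hunit.mul_left_injective (by linear_combination -h' + (g : PowerSeries R) * hQ)
  rw [← Polynomial.coeff_coe, hf, map_neg, PowerSeries.coeff_mul]
  simp only [Polynomial.coeff_coe, Q, PowerSeries.coeff_mk]

theorem sum_antidiagonal_coeff_expand_mul (a : R[X]) (F : ℕ → R) {p u v : ℕ} (hv : v < p) :
    ∑ x ∈ antidiagonal (u * p + v), (expand R p a).coeff x.1 * F x.2 =
      ∑ x ∈ antidiagonal u, a.coeff x.1 * F (x.2 * p + v) := by
  have hp : 0 < p := by omega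
  symm
  refine sum_of_injOn (fun x => (x.1 * p, x.2 * p + v)) ?_ ?_ ?_ ?_
  · rintro ⟨i, j⟩ - ⟨i', j'⟩ - h
    simp only [Prod.mk.injEq, add_left_inj, Nat.mul_left_inj hp.ne'] at h
    simp [h]
  · rintro ⟨i, j⟩ h
    simp only [mem_coe, HasAntidiagonal.mem_antidiagonal] at h ⊢
    rw [← h]; ring
  · rintro ⟨i, j⟩ hij hnot
    rw [coeff_expand hp]
    split_ifs with hdvd
    · obtain ⟨c, rfl⟩ := hdvd
      exfalso
      apply hnot
      simp only [HasAntidiagonal.mem_antidiagonal] at hij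
      have hc : c ≤ u := by nlinarith
      obtain ⟨d, rfl⟩ := Nat.exists_eq_add_of_le hc
      refine ⟨(c, d), by simp, ?_⟩
      simp only [Prod.mk.injEq]
      constructor <;> linarith
    · simp
  · rintro ⟨i, j⟩ -
    simp [coeff_expand hp, Nat.mul_div_cancel _ hp]

noncomputable def cyclotomicCoeffPattern (R : Type*) [CommRing R] (n r u v : ℕ) : R :=
  -∑ x ∈ antidiagonal u,
    (cyclotomic n R).coeff x.1 * (cyclotomicCofactor n R).coeff ((x.2 * r + v) % n)

theorem cyclotomicCoeffPattern_mod (n r u v : ℕ) :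
    cyclotomicCoeffPattern R n r u (v % n) = cyclotomicCoeffPattern R n r u v := by
  simp only [cyclotomicCoeffPattern, Nat.add_mod_mod]

theorem coeff_cyclotomic_mul_prime {n p u v : ℕ} (hn : 0 < n) (hp : p.Prime) (hpn : ¬p ∣ n)
    (hv : v < p) :
    (cyclotomic (n * p) R).coeff (u * p + v) = cyclotomicCoeffPattern R n (p % n) u v := by
  rw [coeff_eq_neg_sum_of_mul_X_pow_sub_one (natDegree_cyclotomicCofactor_lt hn)
    (cyclotomic_mul_prime_mul_X_pow_sub_one hn hp hpn),
    sum_antidiagonal_coeff_expand_mul _ (fun j => (cyclotomicCofactor n R).coeff (j % n)) hv,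
    cyclotomicCoeffPattern]
  refine congrArg _ (sum_congr rfl fun x _ => congrArg _ (congrArg _ ?_))
  exact ((Nat.mod_modEq p n).symm.mul_left x.2).add_right v

theorem range_coeff_cyclotomic_mul_prime {n p : ℕ} (hn : 0 < n) (hp : p.Prime) (hnp : n < p) :
    Set.range (cyclotomic (n * p) R).coeff =
      Set.range fun x : ℕ × ℕ => cyclotomicCoeffPattern R n (p % n) x.1 x.2 := by
  have hpn : ¬p ∣ n := fun h => (Nat.le_of_dvd hn h).not_gt hnp
  ext c
  constructor
  · rintro ⟨m, rfl⟩
    refine ⟨(m / p, m % p), ?_⟩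
    dsimp only
    rw [← coeff_cyclotomic_mul_prime hn hp hpn (Nat.mod_lt m hp.pos), Nat.div_add_mod']
  · rintro ⟨⟨u, v⟩, rfl⟩
    refine ⟨u * p + v % n, ?_⟩
    rw [coeff_cyclotomic_mul_prime hn hp hpn ((Nat.mod_lt v hn).trans hnp),
      cyclotomicCoeffPattern_mod]

end Polynomial

theorem cyclotomic_periodicity (n s t : ℕ) (hn : 0 < n)
    (hs : s.Prime) (ht : t.Prime) (hns : n < s) (hst : s < t)
    (hmod : s ≡ t [MOD n]) :
    Set.range (Polynomial.cyclotomic (n * s) ℤ).coeff =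
      Set.range (Polynomial.cyclotomic (n * t) ℤ).coeff := by
  rw [range_coeff_cyclotomic_mul_prime hn hs hns,
    range_coeff_cyclotomic_mul_prime hn ht (hns.trans hst), hmod]
end

section
/- Let p < q be distinct primes. For every integer k, there exists a polynomial g ∈ ℤ[x] of degree less than (p−1)(q−1) with all coefficients in {−1, 0, 1} such that x^k ≡ g(x) (mod Φ_{pq}(x)). -/
open Polynomial Finset



-- L2
lemma aux_dvd_mod (N k : ℕ) : (X ^ N - 1 : ℤ[X]) ∣ (X : ℤ[X]) ^ k - X ^ (k % N) := by
  have h : (X : ℤ[X]) ^ k - X ^ (k % N) = X ^ (k % N) * ((X ^ N) ^ (k / N) - 1) := by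
    rw [mul_sub, mul_one, ← pow_mul, ← pow_add, Nat.mod_add_div]
  rw [h]
  exact Dvd.dvd.mul_left (by simpa using sub_dvd_pow_sub_pow (X ^ N : ℤ[X]) 1 (k / N)) _

-- L3
lemma aux_cyclo_dvd_S {p q : ℕ} (hp : p.Prime) (hq : q.Prime) (hne : p ≠ q) :
    Polynomial.cyclotomic (p * q) ℤ ∣ ∑ a ∈ range q, (X : ℤ[X]) ^ (a * p) := by
  have hdvd : ¬ p ∣ q := fun h => hne ((Nat.prime_dvd_prime_iff_eq hp hq).mp h)
  haveI : Fact q.Prime := ⟨hq⟩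
  have h1 : (expand ℤ p) (cyclotomic q ℤ) = cyclotomic (q * p) ℤ * cyclotomic q ℤ :=
    cyclotomic_expand_eq_cyclotomic_mul hp hdvd ℤ
  have h2 : (expand ℤ p) (cyclotomic q ℤ) = ∑ a ∈ range q, (X : ℤ[X]) ^ (a * p) := by
    rw [cyclotomic_prime ℤ q, map_sum]
    refine Finset.sum_congr rfl fun a _ => ?_
    rw [map_pow, expand_X, ← pow_mul, mul_comm p a]
  rw [← h2, h1, mul_comm q p]
  exact Dvd.intro _ rfl


lemma aux_rep {p q m : ℕ} (hp : p.Prime) (hq : q.Prime) (hpq : p < q)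
    (hm1 : (p - 1) * (q - 1) ≤ m) (hm2 : m < p * q) :
    ∃ i j, i < q ∧ j < p ∧ i * p + j * q = m := by
  haveI : Fact q.Prime := ⟨hq⟩
  have hp2 : 2 ≤ p := hp.two_le
  have hq2 : 2 ≤ q := hq.two_le
  have hdvd : ¬ q ∣ p := fun h => absurd (Nat.le_of_dvd hp.pos h) (by omega)
  have hpne : (p : ZMod q) ≠ 0 := fun h => hdvd ((ZMod.natCast_eq_zero_iff p q).mp h)
  set i : ℕ := ((m : ZMod q) * (p : ZMod q)⁻¹).val with hi_def
  have hi : i < q := ZMod.val_lt _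
  have hcast : ((i * p : ℕ) : ZMod q) = (m : ZMod q) := by
    push_cast
    rw [hi_def, ZMod.natCast_val, ZMod.cast_id]
    field_simp
  have hmod : (q : ℤ) ∣ (m : ℤ) - (i * p : ℕ) :=
    (Nat.modEq_iff_dvd).mp ((ZMod.natCast_eq_natCast_iff _ _ _).mp hcast)
  obtain ⟨c, hc⟩ := hmod
  have hc' : (m : ℤ) - i * p = q * c := by push_cast at hc ⊢; linarith
  have hm1' : ((p:ℤ) - 1) * ((q:ℤ) - 1) ≤ m := by
    zify [hp.one_le, hq.one_le] at hm1; exact hm1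
  have hm2' : (m : ℤ) < p * q := by exact_mod_cast hm2
  have hiZ : (i : ℤ) ≤ (q : ℤ) - 1 := by
    have : (i : ℤ) < q := by exact_mod_cast hi
    omega
  have hpZ : (2 : ℤ) ≤ p := by exact_mod_cast hp2
  have hqZ : (2 : ℤ) ≤ q := by exact_mod_cast hq2
  have hipZ : (i : ℤ) * p ≤ ((q:ℤ) - 1) * p := by nlinarith
  have hc0 : 0 ≤ c := by nlinarith
  have hcp : c < p := by nlinarith [mul_nonneg (Int.natCast_nonneg i) (Int.natCast_nonneg p)]
  refine ⟨i, c.toNat, hi, by omega, ?_⟩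
  have hfin : ((i * p + c.toNat * q : ℕ) : ℤ) = (m : ℤ) := by
    push_cast [Int.toNat_of_nonneg hc0]
    linarith
  exact_mod_cast hfin

lemma aux_inj {p q : ℕ} (hp : p.Prime) (hq : q.Prime) (hne : p ≠ q)
    {a a' b b' : ℕ} (ha : a < q) (ha' : a' < q) (hb : b < p) (hb' : b' < p)
    (h : (a * p + b * q) % (p * q) = (a' * p + b' * q) % (p * q)) :
    a = a' ∧ b = b' := by
  have hco : Nat.Coprime p q := (Nat.coprime_primes hp hq).mpr hne
  have hmodq : a * p ≡ a' * p [MOD q] := by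
    have h1 : a * p + b * q ≡ a' * p + b' * q [MOD q] :=
      Nat.ModEq.of_mul_left p h
    have e1 : a * p + b * q ≡ a * p [MOD q] := by
      simpa using (Nat.ModEq.refl (a * p)).add (Nat.modEq_zero_iff_dvd.mpr ⟨b, mul_comm b q⟩)
    have e2 : a' * p + b' * q ≡ a' * p [MOD q] := by
      simpa using (Nat.ModEq.refl (a' * p)).add (Nat.modEq_zero_iff_dvd.mpr ⟨b', mul_comm b' q⟩)
    exact e1.symm.trans (h1.trans e2)
  have hmodp : b * q ≡ b' * q [MOD p] := by
    have h1 : a * p + b * q ≡ a' * p + b' * q [MOD p] :=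
      Nat.ModEq.of_mul_right q h
    have e1 : a * p + b * q ≡ b * q [MOD p] := by
      simpa using (Nat.modEq_zero_iff_dvd.mpr ⟨a, mul_comm a p⟩).add (Nat.ModEq.refl (b * q))
    have e2 : a' * p + b' * q ≡ b' * q [MOD p] := by
      simpa using (Nat.modEq_zero_iff_dvd.mpr ⟨a', mul_comm a' p⟩).add (Nat.ModEq.refl (b' * q))
    exact e1.symm.trans (h1.trans e2)
  constructor
  · have := Nat.ModEq.cancel_right_of_coprime (by simpa [Nat.Coprime] using hco.symm.gcd_eq_one) hmodq
    rwa [Nat.ModEq, Nat.mod_eq_of_lt ha, Nat.mod_eq_of_lt ha'] at this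
  · have := Nat.ModEq.cancel_right_of_coprime (by simpa [Nat.Coprime] using hco.gcd_eq_one) hmodp
    rwa [Nat.ModEq, Nat.mod_eq_of_lt hb, Nat.mod_eq_of_lt hb'] at this


lemma aux_munu {p q m i j : ℕ} (hpq : p < q) (hi : i < q) (hj : j < p)
    (hm : i * p + j * q = m) (hp1 : 1 ≤ p) (hq1 : 1 ≤ q)
    (hm1 : (p - 1) * (q - 1) ≤ m) (hm2 : m < p * q) :
    ∃ μ ν : ℕ → ℤ,
      (∀ a b, a < q → b < p → (p - 1) * (q - 1) ≤ a * p + b * q → a * p + b * q < p * q →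
        (if a = i ∧ b = j then (1 : ℤ) else 0) + μ b + ν a = 0) ∧
      (∀ a b, |(if a = i ∧ b = j then (1 : ℤ) else 0) + μ b + ν a| ≤ 1) := by
  have hD : (p - 1) * (q - 1) + p + q = p * q + 1 := by
    obtain ⟨P, rfl⟩ : ∃ P, p = P + 1 := ⟨p - 1, by omega⟩
    obtain ⟨Q, rfl⟩ : ∃ Q, q = Q + 1 := ⟨q - 1, by omega⟩
    simp only [Nat.add_sub_cancel]
    ring
  by_cases hA : m + q ≤ p * q
  · -- regime A
    refine ⟨fun b => if b ≤ j then -1 else 0, fun a => if i < a then 1 else 0, ?_, ?_⟩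
    · intro a b ha hb hlo hub
      by_cases hij : a = i ∧ b = j
      · obtain ⟨rfl, rfl⟩ := hij
        simp
      · rw [if_neg hij]
        have hbad1 : ¬(i < a ∧ j < b) := by
          rintro ⟨h1, h2⟩
          have f2 : i * p + p ≤ a * p := by
            calc i * p + p = (i + 1) * p := by ring
            _ ≤ a * p := mul_le_mul_left h1 p
          have f4 : j * q + q ≤ b * q := by
            calc j * q + q = (j + 1) * q := by ring
            _ ≤ b * q := mul_le_mul_left h2 q
          linarith
        have hbad2 : ¬(a ≤ i ∧ b ≤ j) := by
          rintro ⟨h1, h2⟩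
          have hor : a < i ∨ b < j := by
            rcases Nat.lt_or_ge a i with h | h
            · exact Or.inl h
            · right
              have : a = i := le_antisymm h1 h
              subst this
              rcases Nat.lt_or_ge b j with h' | h'
              · exact h'
              · exact absurd ⟨rfl, le_antisymm h2 h'⟩ hij
          rcases hor with h | h
          · have f5 : a * p + p ≤ i * p := by
              calc a * p + p = (a + 1) * p := by ring
              _ ≤ i * p := mul_le_mul_left h p
            have f3 : b * q ≤ j * q := mul_le_mul_left h2 q
            linarith
          · have f6 : b * q + q ≤ j * q := by
              calc b * q + q = (b + 1) * q := by ring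
              _ ≤ j * q := mul_le_mul_left h q
            have f1 : a * p ≤ i * p := mul_le_mul_left h1 p
            linarith
        dsimp only
        by_cases h2 : b ≤ j <;> by_cases h3 : i < a
        · rw [if_pos h2, if_pos h3]; norm_num
        · rw [if_pos h2, if_neg h3]; exact absurd (⟨Nat.le_of_not_lt h3, h2⟩ : _ ∧ _) hbad2
        · rw [if_neg h2, if_pos h3]; exact absurd (⟨h3, Nat.lt_of_not_le h2⟩ : _ ∧ _) hbad1
        · rw [if_neg h2, if_neg h3]; norm_num
    · intro a b
      by_cases hij : a = i ∧ b = j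
      · obtain ⟨rfl, rfl⟩ := hij
        simp
      · rw [if_neg hij]
        dsimp only
        split_ifs <;> norm_num
  · by_cases hB : p * q < m + p
    · -- regime B
      refine ⟨fun b => if b < j then 1 else 0, fun a => if i ≤ a then -1 else 0, ?_, ?_⟩
      · intro a b ha hb hlo hub
        by_cases hij : a = i ∧ b = j
        · obtain ⟨rfl, rfl⟩ := hij
          simp
        · rw [if_neg hij]
          have hbad1 : ¬(i ≤ a ∧ j ≤ b) := by
            rintro ⟨h1, h2⟩
            have hor : i < a ∨ j < b := by
              rcases Nat.lt_or_ge i a with h | h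
              · exact Or.inl h
              · right
                have : a = i := le_antisymm h h1
                subst this
                rcases Nat.lt_or_ge j b with h' | h'
                · exact h'
                · exact absurd ⟨rfl, le_antisymm h' h2⟩ hij
            rcases hor with h | h
            · have f2 : i * p + p ≤ a * p := by
                calc i * p + p = (i + 1) * p := by ring
                _ ≤ a * p := mul_le_mul_left h p
              have f4 : j * q ≤ b * q := mul_le_mul_left h2 q
              linarith
            · have f4 : j * q + q ≤ b * q := by
                calc j * q + q = (j + 1) * q := by ring
                _ ≤ b * q := mul_le_mul_left h q
              have f2 : i * p ≤ a * p := mul_le_mul_left h1 p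
              linarith
          have hbad2 : ¬(a < i ∧ b < j) := by
            rintro ⟨h1, h2⟩
            have f5 : a * p + p ≤ i * p := by
              calc a * p + p = (a + 1) * p := by ring
              _ ≤ i * p := mul_le_mul_left h1 p
            have f6 : b * q + q ≤ j * q := by
              calc b * q + q = (b + 1) * q := by ring
              _ ≤ j * q := mul_le_mul_left h2 q
            linarith
          dsimp only
          by_cases h2 : b < j <;> by_cases h3 : i ≤ a
          · rw [if_pos h2, if_pos h3]; norm_num
          · rw [if_pos h2, if_neg h3]; exact absurd (⟨Nat.lt_of_not_le h3, h2⟩ : _ ∧ _) hbad2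
          · rw [if_neg h2, if_pos h3]; exact absurd (⟨h3, Nat.le_of_not_lt h2⟩ : _ ∧ _) hbad1
          · rw [if_neg h2, if_neg h3]; norm_num
      · intro a b
        by_cases hij : a = i ∧ b = j
        · obtain ⟨rfl, rfl⟩ := hij
          simp
        · rw [if_neg hij]
          dsimp only
          split_ifs <;> norm_num
    · -- regime M : p*q < m + q and m + p ≤ p*q
      have hM1 : p * q < m + q := Nat.lt_of_not_le hA
      have hM2 : m + p ≤ p * q := Nat.le_of_not_lt hB
      refine ⟨fun _ => 0, fun a => if a = i then -1 else 0, ?_, ?_⟩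
      · intro a b ha hb hlo hub
        by_cases hij : a = i ∧ b = j
        · obtain ⟨rfl, rfl⟩ := hij
          simp
        · rw [if_neg hij]
          have hane : a ≠ i ∨ (a = i ∧ b ≠ j) := by tauto
          dsimp only
          by_cases h1 : a = i
          case neg => rw [if_neg h1]; norm_num
          rw [if_pos h1]
          exfalso
          subst h1
          have hbne : b ≠ j := by tauto
          rcases Nat.lt_or_ge b j with h | h
          · have f6 : b * q + q ≤ j * q := by
              calc b * q + q = (b + 1) * q := by ring
              _ ≤ j * q := mul_le_mul_left h q
            linarith
          · have h' : j < b := by omega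
            have f4 : j * q + q ≤ b * q := by
              calc j * q + q = (j + 1) * q := by ring
              _ ≤ b * q := mul_le_mul_left h' q
            linarith
      · intro a b
        by_cases hij : a = i ∧ b = j
        · obtain ⟨rfl, rfl⟩ := hij
          simp
        · rw [if_neg hij]
          dsimp only
          split_ifs <;> norm_num


theorem pow_congr_flat_mod_cyclotomic_pq (p q : ℕ) (hp : p.Prime) (hq : q.Prime)
    (hpq : p < q) (k : ℕ) :
    ∃ g : Polynomial ℤ, g.degree < ((p - 1) * (q - 1) : ℕ) ∧
      (∀ i, |g.coeff i| ≤ 1) ∧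
      Polynomial.cyclotomic (p * q) ℤ ∣ (Polynomial.X ^ k - g) := by
  classical
  have hne : p ≠ q := Nat.ne_of_lt hpq
  have hp1 : 1 ≤ p := hp.one_le
  have hq1 : 1 ≤ q := hq.one_le
  have hD : (p - 1) * (q - 1) + p + q = p * q + 1 := by
    obtain ⟨P, rfl⟩ : ∃ P, p = P + 1 := ⟨p - 1, by omega⟩
    obtain ⟨Q, rfl⟩ : ∃ Q, q = Q + 1 := ⟨q - 1, by omega⟩
    simp only [Nat.add_sub_cancel]
    ring
  have hpq0 : 0 < p * q := by positivity
  by_cases hcase : k % (p * q) < (p - 1) * (q - 1)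
  · refine ⟨X ^ (k % (p * q)), ?_, ?_, ?_⟩
    · rw [degree_X_pow]
      exact_mod_cast hcase
    · intro t
      rw [coeff_X_pow]
      split_ifs <;> norm_num
    · exact dvd_trans (cyclotomic.dvd_X_pow_sub_one (p * q) ℤ) (aux_dvd_mod (p * q) k)
  · push_neg at hcase
    have hmlt : k % (p * q) < p * q := Nat.mod_lt _ hpq0
    obtain ⟨i, j, hi, hj, hm⟩ := aux_rep hp hq hpq hcase hmlt
    obtain ⟨μ, ν, hvan, hflat⟩ := aux_munu hpq hi hj hm hp1 hq1 hcase hmlt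
    -- F1 : W vanishes whenever the reduced exponent is ≥ D
    have hF1 : ∀ a b, a < q → b < p →
        (p - 1) * (q - 1) ≤ (a * p + b * q) % (p * q) →
        (if a = i ∧ b = j then (1 : ℤ) else 0) + μ b + ν a = 0 := by
      intro a b ha hb hge
      have h1 : a * p + p ≤ p * q := by
        calc a * p + p = (a + 1) * p := by ring
        _ ≤ q * p := mul_le_mul_left ha p
        _ = p * q := mul_comm q p
      have h2 : b * q + q ≤ p * q := by
        calc b * q + q = (b + 1) * q := by ring
        _ ≤ p * q := mul_le_mul_left hb q
      rcases Nat.lt_or_ge (a * p + b * q) (p * q) with hlt | hge2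
      · rw [Nat.mod_eq_of_lt hlt] at hge
        exact hvan a b ha hb hge hlt
      · exfalso
        have e1 : (a * p + b * q) % (p * q) = (a * p + b * q - p * q) % (p * q) :=
          Nat.mod_eq_sub_mod hge2
        have hlt2 : a * p + b * q - p * q < p * q := by
          rw [tsub_lt_iff_left hge2]
          linarith
        rw [e1, Nat.mod_eq_of_lt hlt2] at hge
        have hsum : a * p + b * q - p * q + p * q = a * p + b * q :=
          Nat.sub_add_cancel hge2
        linarith
    refine ⟨∑ x ∈ Finset.range q ×ˢ Finset.range p,
        C ((if x.1 = i ∧ x.2 = j then (1 : ℤ) else 0) + μ x.2 + ν x.1) *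
          X ^ ((x.1 * p + x.2 * q) % (p * q)), ?_, ?_, ?_⟩
    · -- degree bound
      refine lt_of_le_of_lt (degree_sum_le _ _) ?_
      rw [Finset.sup_lt_iff (show (⊥ : WithBot ℕ) < (((p - 1) * (q - 1) : ℕ) : WithBot ℕ) from
        WithBot.bot_lt_coe _)]
      intro x hx
      obtain ⟨hx1, hx2⟩ := Finset.mem_product.mp hx
      rw [Finset.mem_range] at hx1 hx2
      by_cases hw : ((if x.1 = i ∧ x.2 = j then (1 : ℤ) else 0) + μ x.2 + ν x.1) = 0
      · rw [hw, map_zero, zero_mul, degree_zero]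
        exact WithBot.bot_lt_coe _
      · rw [degree_C_mul_X_pow _ hw]
        have : (x.1 * p + x.2 * q) % (p * q) < (p - 1) * (q - 1) :=
          lt_of_not_ge fun hge => hw (hF1 _ _ hx1 hx2 hge)
        exact_mod_cast this
    · -- coefficients
      intro t
      rw [finset_sum_coeff]
      simp only [coeff_C_mul, coeff_X_pow, mul_ite, mul_one, mul_zero]
      by_cases hex : ∃ x ∈ Finset.range q ×ˢ Finset.range p,
          t = (x.1 * p + x.2 * q) % (p * q)
      · obtain ⟨x₀, hx₀, ht⟩ := hex
        rw [Finset.sum_eq_single_of_mem x₀ hx₀ ?_]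
        · rw [if_pos ht]
          exact hflat x₀.1 x₀.2
        · intro x hx hxne
          rw [if_neg]
          intro ht'
          obtain ⟨ha1, ha2⟩ := Finset.mem_product.mp hx
          obtain ⟨hb1, hb2⟩ := Finset.mem_product.mp hx₀
          rw [Finset.mem_range] at ha1 ha2 hb1 hb2
          have heq := aux_inj hp hq hne ha1 hb1 ha2 hb2 (ht'.symm.trans ht)
          exact hxne (Prod.ext heq.1 heq.2)
      · rw [Finset.sum_eq_zero]
        · norm_num
        · intro x hx
          exact if_neg fun h => hex ⟨x, hx, h⟩
    · -- divisibility
      have hS : cyclotomic (p * q) ℤ ∣ ∑ a ∈ range q, (X : ℤ[X]) ^ (a * p) :=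
        aux_cyclo_dvd_S hp hq hne
      have hT : cyclotomic (p * q) ℤ ∣ ∑ b ∈ range p, (X : ℤ[X]) ^ (b * q) := by
        have := aux_cyclo_dvd_S hq hp hne.symm
        rwa [mul_comm q p] at this
      set s := Finset.range q ×ˢ Finset.range p with hs
      set W : ℕ × ℕ → ℤ := fun x =>
        (if x.1 = i ∧ x.2 = j then (1 : ℤ) else 0) + μ x.2 + ν x.1 with hW
      set g : ℤ[X] := ∑ x ∈ s, C (W x) * X ^ ((x.1 * p + x.2 * q) % (p * q)) with hg
      set G : ℤ[X] := ∑ x ∈ s, C (W x) * X ^ (x.1 * p + x.2 * q) with hG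
      have h1 : cyclotomic (p * q) ℤ ∣ (X : ℤ[X]) ^ k - X ^ (k % (p * q)) :=
        dvd_trans (cyclotomic.dvd_X_pow_sub_one (p * q) ℤ) (aux_dvd_mod (p * q) k)
      have h2 : cyclotomic (p * q) ℤ ∣ G - g := by
        have hsplit : G - g = ∑ x ∈ s,
            C (W x) * (X ^ (x.1 * p + x.2 * q) - X ^ ((x.1 * p + x.2 * q) % (p * q))) := by
          rw [hg, hG, ← Finset.sum_sub_distrib]
          exact Finset.sum_congr rfl fun x _ => by ring
        rw [hsplit]
        refine Finset.dvd_sum fun x _ => Dvd.dvd.mul_left ?_ _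
        exact dvd_trans (cyclotomic.dvd_X_pow_sub_one (p * q) ℤ)
          (aux_dvd_mod (p * q) (x.1 * p + x.2 * q))
      have e1 : ∑ x ∈ s, C (if x.1 = i ∧ x.2 = j then (1 : ℤ) else 0) *
          X ^ (x.1 * p + x.2 * q) = X ^ (i * p + j * q) := by
        rw [Finset.sum_eq_single ((i, j) : ℕ × ℕ)]
        · simp
        · intro x hx hxne
          rw [if_neg, map_zero, zero_mul]
          rintro ⟨ha, hb⟩
          exact hxne (Prod.ext ha hb)
        · intro hnot
          exact absurd (Finset.mem_product.mpr
            ⟨Finset.mem_range.mpr hi, Finset.mem_range.mpr hj⟩) hnot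
      have e2 : ∑ x ∈ s, C (μ x.2) * X ^ (x.1 * p + x.2 * q) =
          (∑ a ∈ range q, (X : ℤ[X]) ^ (a * p)) * (∑ b ∈ range p, C (μ b) * X ^ (b * q)) := by
        rw [Finset.sum_mul_sum, hs, Finset.sum_product]
        refine Finset.sum_congr rfl fun a _ => Finset.sum_congr rfl fun b _ => ?_
        rw [pow_add]
        ring
      have e3 : ∑ x ∈ s, C (ν x.1) * X ^ (x.1 * p + x.2 * q) =
          (∑ b ∈ range p, (X : ℤ[X]) ^ (b * q)) * (∑ a ∈ range q, C (ν a) * X ^ (a * p)) := by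
        rw [Finset.sum_mul_sum, hs, Finset.sum_product]
        rw [Finset.sum_comm]
        refine Finset.sum_congr rfl fun a _ => Finset.sum_congr rfl fun b _ => ?_
        rw [pow_add]
        ring
      have hGs : G = X ^ (i * p + j * q) +
          (∑ a ∈ range q, (X : ℤ[X]) ^ (a * p)) * (∑ b ∈ range p, C (μ b) * X ^ (b * q)) +
          (∑ b ∈ range p, (X : ℤ[X]) ^ (b * q)) * (∑ a ∈ range q, C (ν a) * X ^ (a * p)) := by
        rw [← e1, ← e2, ← e3, hG, ← Finset.sum_add_distrib, ← Finset.sum_add_distrib]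
        refine Finset.sum_congr rfl fun x _ => ?_
        rw [hW]
        dsimp only
        rw [map_add, map_add]
        ring
      have h3 : cyclotomic (p * q) ℤ ∣ G - X ^ (k % (p * q)) := by
        have hrw : G - X ^ (k % (p * q)) =
            (∑ a ∈ range q, (X : ℤ[X]) ^ (a * p)) * (∑ b ∈ range p, C (μ b) * X ^ (b * q)) +
            (∑ b ∈ range p, (X : ℤ[X]) ^ (b * q)) * (∑ a ∈ range q, C (ν a) * X ^ (a * p)) := by
          rw [hGs, hm]
          ring
        rw [hrw]
        exact dvd_add (hS.mul_right _) (hT.mul_right _)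
      have hfin : (X : ℤ[X]) ^ k - g =
          ((X : ℤ[X]) ^ k - X ^ (k % (p * q))) + (G - g) - (G - X ^ (k % (p * q))) := by
        ring
      rw [hfin]
      exact dvd_sub (dvd_add h1 h2) h3
end

section
/- Let p < q < r be primes with r ≡ 1 (mod pq) or r ≡ −1 (mod pq). Then Φ_{pqr}(x) is flat, i.e., all its coefficients lie in {−1, 0, 1}. -/
open Polynomial Finset

namespace CycFlat

/-! ### Arithmetic core: the numerical semigroup indicator -/

open Classical in
noncomputable def NN (p q t : ℕ) : ℤ := if (∃ i j : ℕ, i*p + j*q = t) then 1 else 0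

section Arith

variable {p q : ℕ} (hp2 : 2 ≤ p) (hpq : p < q) (hco : Nat.Coprime p q)

lemma NN_nonneg (t : ℕ) : 0 ≤ NN p q t := by
  unfold NN; split <;> norm_num

lemma NN_le_one (t : ℕ) : NN p q t ≤ 1 := by
  unfold NN; split <;> norm_num

lemma NN_eq_one (t : ℕ) (h : ∃ i j : ℕ, i*p + j*q = t) : NN p q t = 1 := by
  unfold NN; exact if_pos h

lemma NN_eq_zero (t : ℕ) (h : ¬ ∃ i j : ℕ, i*p + j*q = t) : NN p q t = 0 := by
  unfold NN; exact if_neg h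

include hpq hco in
lemma rep_uniq {t i j i' j' : ℕ} (ht : t < p*q) (h1 : i*p + j*q = t)
    (h2 : i'*p + j'*q = t) : i = i' ∧ j = j' := by
  have hq0 : 0 < q := by omega
  have hiq : i < q := by
    rcases Nat.lt_or_ge i q with h | h
    · exact h
    · exfalso
      have h3 : q*p ≤ i*p := Nat.mul_le_mul h (le_refl p)
      have h4 : p*q = q*p := Nat.mul_comm p q
      omega
  have hiq' : i' < q := by
    rcases Nat.lt_or_ge i' q with h | h
    · exact h
    · exfalso
      have h3 : q*p ≤ i'*p := Nat.mul_le_mul h (le_refl p)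
      have h4 : p*q = q*p := Nat.mul_comm p q
      omega
  have hcast : (i:ℤ)*p + j*q = i'*p + j'*q := by exact_mod_cast (h1.trans h2.symm)
  have key : ((i : ℤ) - i') * p = ((j' : ℤ) - j) * q := by linear_combination hcast
  have hqd : (q : ℤ) ∣ ((i : ℤ) - i') * p := ⟨(j' : ℤ) - j, by linear_combination key⟩
  have hcop : IsCoprime (q : ℤ) (p : ℤ) :=
    Int.isCoprime_iff_gcd_eq_one.mpr (by
      simpa [Nat.Coprime, Nat.gcd_comm] using hco)
  obtain ⟨c, hc⟩ := (IsCoprime.dvd_of_dvd_mul_right hcop) hqd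
  have hc0 : c = 0 := by
    rcases lt_trichotomy c 0 with h | h | h
    · exfalso
      have h1' : (q:ℤ)*c ≤ q*(-1) := by
        apply mul_le_mul_of_nonneg_left (by omega) (by positivity)
      have h2' : (q:ℤ)*(-1) = -q := by ring
      omega
    · exact h
    · exfalso
      have h1' : (q:ℤ)*1 ≤ q*c := by
        apply mul_le_mul_of_nonneg_left (by omega) (by positivity)
      have h2' : (q:ℤ)*1 = q := by ring
      omega
  have hii : i = i' := by
    rw [hc0, mul_zero] at hc
    omega
  subst hii
  refine ⟨rfl, ?_⟩
  have hjq : j*q = j'*q := by omega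
  exact Nat.eq_of_mul_eq_mul_right hq0 hjq

include hp2 hpq in
lemma rep_lt {t i j : ℕ} (ht : t < p*q) (h1 : i*p + j*q = t) : i < q ∧ j < p := by
  have hp0 : 0 < p := by omega
  constructor
  · rcases Nat.lt_or_ge i q with h | h
    · exact h
    · exfalso
      have h3 : q*p ≤ i*p := Nat.mul_le_mul h (le_refl p)
      have h4 : p*q = q*p := Nat.mul_comm p q
      omega
  · rcases Nat.lt_or_ge j p with h | h
    · exact h
    · exfalso
      have h3 : p*q ≤ j*q := Nat.mul_le_mul h (le_refl q)
      omega

include hpq hco in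
lemma NN_of_qdvd {t : ℕ} (hd : q ∣ t) (ht : t < p*q) : NN p q t = 1 := by
  obtain ⟨c, rfl⟩ := hd
  exact NN_eq_one _ ⟨0, c, by ring⟩

include hpq hco in
lemma NN_qdvd_sub {t : ℕ} (hd : q ∣ t) (ht : t < p*q) (hpt : p ≤ t) :
    NN p q (t - p) = 0 := by
  apply NN_eq_zero
  rintro ⟨i, j, hij⟩
  obtain ⟨c, rfl⟩ := hd
  have e : (i+1)*p = i*p + p := by ring
  have h1 : (i+1)*p + j*q = q*c := by omega
  have h2 : 0*p + c*q = q*c := by ring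
  have := rep_uniq hpq hco ht h1 h2
  omega

lemma NN_step {t : ℕ} (hd : ¬ q ∣ t) (hpt : p ≤ t) :
    NN p q t = NN p q (t - p) := by
  unfold NN
  congr 1
  apply propext
  constructor
  · rintro ⟨i, j, hij⟩
    cases i with
    | zero => exact absurd ⟨j, by rw [Nat.mul_comm]; omega⟩ hd
    | succ m =>
      refine ⟨m, j, ?_⟩
      have e : (m+1)*p = m*p + p := by ring
      omega
  · rintro ⟨i, j, hij⟩
    refine ⟨i+1, j, ?_⟩
    have e : (i+1)*p = i*p + p := by ring
    omega

lemma NN_small {t : ℕ} (h : t < p) (h0 : ¬ q ∣ t) : NN p q t = 0 := by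
  apply NN_eq_zero
  rintro ⟨i, j, hij⟩
  have hi : i = 0 := by
    by_contra hi
    have h3 : 1*p ≤ i*p := Nat.mul_le_mul (by omega) (le_refl p)
    omega
  subst hi
  exact h0 ⟨j, by rw [Nat.mul_comm]; omega⟩

lemma NN_pdvd_of_lt_q {t : ℕ} (h : t < q) (hr : ∃ i j : ℕ, i*p + j*q = t) : p ∣ t := by
  obtain ⟨i, j, hij⟩ := hr
  have hj : j = 0 := by
    by_contra hj
    have h3 : 1*q ≤ j*q := Nat.mul_le_mul (by omega) (le_refl q)
    omega
  subst hj
  exact ⟨i, by rw [Nat.mul_comm]; omega⟩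

end Arith

/-! ### Interval sums of b via NN -/

noncomputable def SN (p q l u : ℕ) : ℤ :=
  if l ≤ u then NN p q u - (if l = 0 then 0 else NN p q (l-1)) else 0

section Core

variable {p q : ℕ} (hp2 : 2 ≤ p) (hpq : p < q) (hco : Nat.Coprime p q)

lemma SN_abs_le (l u : ℕ) : |SN p q l u| ≤ 1 := by
  have h1 := NN_nonneg (p := p) (q := q) u
  have h2 := NN_le_one (p := p) (q := q) u
  have h3 := NN_nonneg (p := p) (q := q) (l-1)
  have h4 := NN_le_one (p := p) (q := q) (l-1)
  unfold SN
  rw [abs_le]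
  split_ifs <;> constructor <;> omega


lemma NN_rep_of_eq_one {t : ℕ} (h : NN p q t = 1) : ∃ i j : ℕ, i*p + j*q = t := by
  by_contra hc
  rw [NN_eq_zero _ hc] at h
  norm_num at h

lemma SN_of_gt {l u : ℕ} (h : u < l) : SN p q l u = 0 := by
  unfold SN; rw [if_neg (by omega)]

lemma SN_eq_of_le {l u : ℕ} (h : l ≤ u) (h0 : 0 < l) :
    SN p q l u = NN p q u - NN p q (l-1) := by
  unfold SN; rw [if_pos h, if_neg (by omega)]

lemma SN_zero_eq {u : ℕ} : SN p q 0 u = NN p q u := by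
  unfold SN; rw [if_pos (by omega), if_pos rfl]; ring

include hp2 hpq hco in
/-- value of a full window sum of length p with top c -/
lemma SN_window {c : ℕ} (hc : c < p*q) :
    SN p q (c+1-p) c = if q ∣ c then 1 else 0 := by
  by_cases hqd : q ∣ c
  · rw [if_pos hqd]
    by_cases hl : c + 1 ≤ p
    · -- l = 0; c < p forces c = 0
      have hc0 : c = 0 := by
        rcases hqd with ⟨e, he⟩
        rcases Nat.eq_zero_or_pos e with h0 | h0
        · rw [h0, mul_zero] at he; omega
        · exfalso
          have h5 : q * 1 ≤ q * e := Nat.mul_le_mul (le_refl q) (by omega : 1 ≤ e)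
          rw [mul_one] at h5
          omega
      subst hc0
      have : (0:ℕ)+1-p = 0 := by omega
      rw [this, SN_zero_eq]
      exact NN_eq_one _ ⟨0, 0, by ring⟩
    · have hp_le : p ≤ c := by omega
      rw [SN_eq_of_le (by omega) (by omega)]
      have e1 : c+1-p-1 = c-p := by omega
      rw [e1, NN_of_qdvd hpq hco hqd hc, NN_qdvd_sub hpq hco hqd hc hp_le]
      ring
  · rw [if_neg hqd]
    by_cases hl : c + 1 ≤ p
    · have : c+1-p = 0 := by omega
      rw [this, SN_zero_eq]
      exact NN_small (by omega) hqd
    · rw [SN_eq_of_le (by omega) (by omega)]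
      have e1 : c+1-p-1 = c-p := by omega
      rw [e1, NN_step hqd (by omega)]
      ring

include hp2 hpq hco in
/-- Core inequality, case r ≡ 1 (mod pq). -/
lemma core_pos {K t1 : ℕ} (hK : K ≤ p*q - p - q) (ht : t1 < p*q) :
    |SN p q (t1+1-p) (min t1 K) -
      SN p q ((t1+(p*q-q)) % (p*q) + 1 - p) (min ((t1+(p*q-q)) % (p*q)) K)| ≤ 1 := by
  have hn : p + q < p*q := by
    have h1 : 2*q ≤ p*q := Nat.mul_le_mul hp2 (le_refl q)
    omega
  by_cases hc : q ≤ t1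
  · have ht2 : (t1+(p*q-q)) % (p*q) = t1 - q := by
      have e : t1+(p*q-q) = (t1-q) + 1*(p*q) := by omega
      rw [e, Nat.add_mul_mod_self_right, Nat.mod_eq_of_lt (by omega)]
    rw [ht2]
    by_cases h1 : t1 ≤ K
    · -- both windows full
      rw [min_eq_left h1, min_eq_left (by omega : t1 - q ≤ K)]
      have e2 : t1 - q + 1 - p = (t1-q) + 1 - p := rfl
      have w1 := SN_window hp2 hpq hco ht
      have w2 := SN_window hp2 hpq hco (show t1 - q < p*q by omega)
      have hdvd_iff : q ∣ t1 ↔ q ∣ t1 - q := by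
        constructor
        · intro h; exact Nat.dvd_sub h dvd_rfl
        · intro h
          have := Nat.dvd_add h (dvd_refl q)
          rwa [Nat.sub_add_cancel hc] at this
      rw [w1, w2]
      by_cases hqd : q ∣ t1
      · rw [if_pos hqd, if_pos (hdvd_iff.mp hqd)]; norm_num
      · rw [if_neg hqd, if_neg (fun h => hqd (hdvd_iff.mpr h))]; norm_num
    · push_neg at h1
      by_cases h2 : t1 - q ≤ K
      · -- window 1 cut at K, window 2 full
        rw [min_eq_right (by omega : K ≤ t1), min_eq_left h2]
        have w2 := SN_window hp2 hpq hco (show t1 - q < p*q by omega)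
        rw [w2]
        by_cases hqd : q ∣ t1
        · have hdq : q ∣ t1 - q := Nat.dvd_sub hqd dvd_rfl
          rw [if_pos hdq]
          by_cases h3 : t1 + 1 - p ≤ K
          · rw [SN_eq_of_le h3 (by omega)]
            have e1 : t1+1-p-1 = t1-p := by omega
            rw [e1, NN_qdvd_sub hpq hco hqd ht (by omega)]
            have g1 := NN_nonneg (p := p) (q := q) K
            have g2 := NN_le_one (p := p) (q := q) K
            rw [abs_le]; constructor <;> omega
          · rw [SN_of_gt (by omega)]; norm_num
        · rw [if_neg (by
            intro h
            have := Nat.dvd_add h (dvd_refl q)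
            rw [Nat.sub_add_cancel hc] at this
            exact hqd this), sub_zero]
          exact SN_abs_le _ _
      · -- both windows above K except window1 empty
        rw [min_eq_right (by omega : K ≤ t1)]
        rw [SN_of_gt (by omega : K < t1 + 1 - p)]
        rw [zero_sub, abs_neg]
        exact SN_abs_le _ _
  · -- t1 < q : second window dead
    push_neg at hc
    have ht2 : (t1+(p*q-q)) % (p*q) = t1+(p*q-q) := Nat.mod_eq_of_lt (by omega)
    rw [ht2]
    have hdead : SN p q (t1+(p*q-q)+1-p) (min (t1+(p*q-q)) K) = 0 := by
      apply SN_of_gt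
      omega
    rw [hdead, sub_zero]
    exact SN_abs_le _ _

noncomputable def SNW (p q K β : ℕ) : ℤ :=
  if p*q - p + 1 ≤ β then SN p q 0 (min (β+p-1-p*q) K) else SN p q β (min (β+p-1) K)

include hp2 hpq hco in
/-- Core inequality, case r ≡ -1 (mod pq). -/
lemma core_neg {K β : ℕ} (hK : K ≤ p*q - p - q) (hβ : β < p*q) :
    |SNW p q K β - SNW p q K ((β+q) % (p*q))| ≤ 1 := by
  have hn : p + q < p*q := by
    have h1 : 2*q ≤ p*q := Nat.mul_le_mul hp2 (le_refl q)
    omega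
  have habs : ∀ K' β', |SNW p q K' β'| ≤ 1 := by
    intro K' β'; unfold SNW; split <;> exact SN_abs_le _ _
  by_cases hb1 : β ≤ K
  · -- Case A : window 1 starts at β ≤ K
    have hw1 : SNW p q K β = SN p q β (min (β+p-1) K) := by
      unfold SNW; rw [if_neg (by omega)]
    have hb2v : (β+q) % (p*q) = β+q := Nat.mod_eq_of_lt (by omega)
    have hw2 : SNW p q K ((β+q) % (p*q)) = SN p q (β+q) (min (β+q+p-1) K) := by
      rw [hb2v]; unfold SNW; rw [if_neg (by omega)]
    rw [hw1, hw2]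
    by_cases hA1 : β+q ≤ K
    · by_cases hA1a : β+q+p-1 ≤ K
      · -- A1a : both windows full
        rw [min_eq_left (by omega), min_eq_left hA1a]
        have e1 : SN p q β (β+p-1) = SN p q ((β+p-1)+1-p) (β+p-1) := by
          congr 1; omega
        have e2 : SN p q (β+q) (β+q+p-1) = SN p q ((β+q+p-1)+1-p) (β+q+p-1) := by
          congr 1; omega
        rw [e1, e2, SN_window hp2 hpq hco (by omega), SN_window hp2 hpq hco (by omega)]
        have hdvd_iff : q ∣ β+p-1 ↔ q ∣ β+q+p-1 := by
          constructor
          · intro h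
            have h2 := Nat.dvd_add h (dvd_refl q)
            have e : β+p-1+q = β+q+p-1 := by omega
            rwa [e] at h2
          · intro h
            have h2 := Nat.dvd_sub h (dvd_refl q)
            have e : β+q+p-1-q = β+p-1 := by omega
            rwa [e] at h2
        by_cases hqd : q ∣ β+p-1
        · rw [if_pos hqd, if_pos (hdvd_iff.mp hqd)]; norm_num
        · rw [if_neg hqd, if_neg (fun h => hqd (hdvd_iff.mpr h))]; norm_num
      · -- A1b : window 1 full, window 2 cut at K
        rw [min_eq_left (by omega : β+p-1 ≤ K), min_eq_right (by omega : K ≤ β+q+p-1)]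
        have e1 : SN p q β (β+p-1) = SN p q ((β+p-1)+1-p) (β+p-1) := by
          congr 1; omega
        rw [e1, SN_window hp2 hpq hco (by omega)]
        rw [SN_eq_of_le hA1 (by omega)]
        by_cases hqd : q ∣ β+p-1
        · rw [if_pos hqd]
          have hz : NN p q (β+q-1) = 0 := by
            have hqd2 : q ∣ β+p-1+q := Nat.dvd_add hqd (dvd_refl q)
            have h7 := NN_qdvd_sub hpq hco hqd2 (show β+p-1+q < p*q by omega) (by omega)
            have e : β+p-1+q-p = β+q-1 := by omega
            rwa [e] at h7
          rw [hz]
          have g1 := NN_nonneg (p := p) (q := q) K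
          have g2 := NN_le_one (p := p) (q := q) K
          rw [abs_le]; constructor <;> omega
        · rw [if_neg hqd]
          have g1 := NN_nonneg (p := p) (q := q) K
          have g2 := NN_le_one (p := p) (q := q) K
          have g3 := NN_nonneg (p := p) (q := q) (β+q-1)
          have g4 := NN_le_one (p := p) (q := q) (β+q-1)
          rw [abs_le]; constructor <;> omega
    · -- A2 : window 2 empty
      rw [min_eq_right (by omega : K ≤ β+q+p-1)]
      rw [SN_of_gt (by omega : K < β+q), sub_zero]
      exact SN_abs_le _ _
  · push_neg at hb1
    by_cases hB2 : p*q - p + 1 ≤ β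
    · -- B2 : window 1 wraps around
      have hw1 : SNW p q K β = SN p q 0 (min (β+p-1-p*q) K) := by
        unfold SNW; rw [if_pos hB2]
      have hβ2v : (β+q) % (p*q) = β+q-p*q := by
        rw [Nat.mod_eq_sub_mod (by omega), Nat.mod_eq_of_lt (by omega)]
      have hw2 : SNW p q K ((β+q) % (p*q)) = SN p q (β+q-p*q) (min ((β+q-p*q)+p-1) K) := by
        rw [hβ2v]; unfold SNW; rw [if_neg (by omega)]
      rw [hw1, hw2, SN_zero_eq]
      by_cases hKb2 : β+q-p*q ≤ K
      · have hminv : min (β+p-1-p*q) K = β+p-1-p*q := min_eq_left (by omega)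
        rw [hminv]
        rw [SN_eq_of_le (by omega) (by omega)]
        have hkey : NN p q (β+p-1-p*q) = 0 ∨ NN p q (β+q-p*q-1) = 0 := by
          by_contra hcon
          push_neg at hcon
          have g1 := NN_nonneg (p := p) (q := q) (β+p-1-p*q)
          have g2 := NN_le_one (p := p) (q := q) (β+p-1-p*q)
          have g3 := NN_nonneg (p := p) (q := q) (β+q-p*q-1)
          have g4 := NN_le_one (p := p) (q := q) (β+q-p*q-1)
          have h1 : NN p q (β+p-1-p*q) = 1 := by omega
          have h2 : NN p q (β+q-p*q-1) = 1 := by omega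
          have hv_lt : β+p-1-p*q < p := by omega
          have hqd : q ∣ β+p-1-p*q := by
            by_contra hnd
            rw [NN_small hv_lt hnd] at h1; norm_num at h1
          have hv0 : β+p-1-p*q = 0 := by
            rcases hqd with ⟨e, he⟩
            rcases Nat.eq_zero_or_pos e with h0 | h0
            · rw [h0, mul_zero] at he; omega
            · exfalso
              have h5 : q * 1 ≤ q * e := Nat.mul_le_mul (le_refl q) (by omega : 1 ≤ e)
              rw [mul_one] at h5
              omega
          have hpd : p ∣ β+q-p*q-1 := NN_pdvd_of_lt_q (by omega) (NN_rep_of_eq_one h2)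
          have hpq' : p ∣ q := by
            have h6 : p ∣ (β+q-p*q-1) + p := Nat.dvd_add hpd (dvd_refl p)
            have e6 : (β+q-p*q-1)+p = q := by omega
            rwa [e6] at h6
          have := hco.eq_one_of_dvd hpq'
          omega
        have g1 := NN_nonneg (p := p) (q := q) (β+p-1-p*q)
        have g2 := NN_le_one (p := p) (q := q) (β+p-1-p*q)
        have g3 := NN_nonneg (p := p) (q := q) (β+q-p*q-1)
        have g4 := NN_le_one (p := p) (q := q) (β+q-p*q-1)
        have g5 := NN_nonneg (p := p) (q := q) (min ((β+q-p*q)+p-1) K)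
        have g6 := NN_le_one (p := p) (q := q) (min ((β+q-p*q)+p-1) K)
        rw [abs_le]
        rcases hkey with hk | hk <;> rw [hk] <;> constructor <;> omega
      · -- K < β+q-p*q : window 2 empty
        rw [SN_of_gt (by omega : min ((β+q-p*q)+p-1) K < β+q-p*q), sub_zero]
        have g5 := NN_nonneg (p := p) (q := q) (min (β+p-1-p*q) K)
        have g6 := NN_le_one (p := p) (q := q) (min (β+p-1-p*q) K)
        rw [abs_le]; constructor <;> omega
    · -- B1 : window 1 empty
      have hw1 : SNW p q K β = SN p q β (min (β+p-1) K) := by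
        unfold SNW; rw [if_neg hB2]
      rw [hw1, SN_of_gt (by omega : min (β+p-1) K < β), zero_sub, abs_neg]
      exact habs _ _

end Core

/-! ### Polynomial layer -/

section Poly

variable {p q r : ℕ} (hp : p.Prime) (hq : q.Prime) (hr : r.Prime)
  (hpq : p < q) (hqr : q < r)

noncomputable def bc (p q m : ℕ) : ℤ := (cyclotomic (p*q) ℤ).coeff m

include hp hq hpq in
lemma divisors_pq : Nat.divisors (p*q) = {1, p, q, p*q} := by
  have hp1 := hp.one_lt
  have hq1 := hq.one_lt
  have hpq0 : p*q ≠ 0 := by positivity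
  ext d
  simp only [Nat.mem_divisors, Finset.mem_insert, Finset.mem_singleton]
  constructor
  · rintro ⟨hd, -⟩
    rcases Nat.dvd_mul.mp hd with ⟨a, b, ha, hb, hab⟩
    rcases hp.eq_one_or_self_of_dvd a ha with rfl | rfl <;>
      rcases hq.eq_one_or_self_of_dvd b hb with rfl | rfl
    · left; omega
    · right; right; left; omega
    · right; left; omega
    · right; right; right; omega
  · rintro (rfl | rfl | rfl | rfl)
    · exact ⟨one_dvd _, hpq0⟩
    · exact ⟨Dvd.intro q rfl, hpq0⟩
    · exact ⟨Dvd.intro_left p rfl, hpq0⟩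
    · exact ⟨dvd_rfl, hpq0⟩

include hp hq hpq in
lemma cyclo_pq_mul_F :
    cyclotomic (p*q) ℤ * ((X^p - 1) * (∑ j ∈ range q, X^j)) = X^(p*q) - 1 := by
  haveI := Fact.mk hp
  haveI := Fact.mk hq
  have hp1 := hp.one_lt
  have hq1 := hq.one_lt
  have h0 : 0 < p*q := by positivity
  have hprod := prod_cyclotomic_eq_X_pow_sub_one h0 ℤ
  rw [divisors_pq hp hq hpq] at hprod
  have m1 : (1:ℕ) ∉ ({p, q, p*q} : Finset ℕ) := by
    simp only [Finset.mem_insert, Finset.mem_singleton]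
    push_neg
    refine ⟨by omega, by omega, by nlinarith⟩
  have m2 : p ∉ ({q, p*q} : Finset ℕ) := by
    simp only [Finset.mem_insert, Finset.mem_singleton]
    push_neg
    refine ⟨by omega, by nlinarith⟩
  have m3 : q ∉ ({p*q} : Finset ℕ) := by
    simp only [Finset.mem_singleton]
    nlinarith
  rw [Finset.prod_insert m1, Finset.prod_insert m2, Finset.prod_insert m3,
    Finset.prod_singleton, cyclotomic_one, cyclotomic_prime ℤ p, cyclotomic_prime ℤ q]
    at hprod
  have hg : ((X:ℤ[X])^p - 1) = (∑ i ∈ range p, X^i) * (X - 1) := (geom_sum_mul X p).symm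
  rw [← hprod, hg]
  ring

include hp hq hpq in
lemma cyclo_pq_mul_geom :
    cyclotomic (p*q) ℤ * (∑ j ∈ range (p*q), X^j) =
      (∑ i ∈ range q, X^(i*p)) * (∑ j ∈ range p, X^(j*q)) := by
  have hp1 := hp.one_lt
  have hq1 := hq.one_lt
  have hF := cyclo_pq_mul_F hp hq hpq
  have h1 : (∑ j ∈ range (p*q), (X:ℤ[X])^j) * (X - 1) = X^(p*q) - 1 := geom_sum_mul X (p*q)
  have h2 : (∑ j ∈ range q, (X:ℤ[X])^j) * (X - 1) = X^q - 1 := geom_sum_mul X q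
  have h3 : (∑ i ∈ range q, (X:ℤ[X])^(i*p)) * (X^p - 1) = X^(p*q) - 1 := by
    have e : ∀ i : ℕ, (X:ℤ[X])^(i*p) = (X^p)^i := by
      intro i; rw [← pow_mul, Nat.mul_comm]
    calc (∑ i ∈ range q, (X:ℤ[X])^(i*p)) * (X^p - 1)
        = (∑ i ∈ range q, ((X:ℤ[X])^p)^i) * (X^p - 1) := by
          congr 1; exact Finset.sum_congr rfl (fun i _ => e i)
      _ = ((X:ℤ[X])^p)^q - 1 := geom_sum_mul _ q
      _ = (X:ℤ[X])^(p*q) - 1 := by rw [← pow_mul]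
  have h4 : (∑ j ∈ range p, (X:ℤ[X])^(j*q)) * (X^q - 1) = X^(p*q) - 1 := by
    have e : ∀ j : ℕ, (X:ℤ[X])^(j*q) = (X^q)^j := by
      intro j; rw [← pow_mul, Nat.mul_comm]
    calc (∑ j ∈ range p, (X:ℤ[X])^(j*q)) * (X^q - 1)
        = (∑ j ∈ range p, ((X:ℤ[X])^q)^j) * (X^q - 1) := by
          congr 1; exact Finset.sum_congr rfl (fun j _ => e j)
      _ = ((X:ℤ[X])^q)^p - 1 := geom_sum_mul _ p
      _ = (X:ℤ[X])^(q*p) - 1 := by rw [← pow_mul]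
      _ = (X:ℤ[X])^(p*q) - 1 := by rw [Nat.mul_comm]
  have hcancel : ((X:ℤ[X]) - 1) * ((X^p - 1) * (X^q - 1)) ≠ 0 := by
    apply mul_ne_zero
    · intro hc
      have := congrArg (fun f => Polynomial.eval 0 f) hc
      simp at this
    · apply mul_ne_zero <;> intro hc <;>
        have := congrArg (fun f => Polynomial.eval 0 f) hc <;>
        simp [zero_pow (by omega : p ≠ 0), zero_pow (by omega : q ≠ 0)] at this
  apply mul_right_cancel₀ hcancel
  linear_combination (cyclotomic (p*q) ℤ * ((X:ℤ[X])^p-1)*((X:ℤ[X])^q-1)) * h1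
    - (cyclotomic (p*q) ℤ * ((X:ℤ[X])^p-1)*((X:ℤ[X])^(p*q)-1)) * h2
    + (((X:ℤ[X])-1)*((X:ℤ[X])^(p*q)-1)) * hF
    - ((∑ j ∈ range p, (X:ℤ[X])^(j*q))*((X:ℤ[X])-1)*((X:ℤ[X])^q-1)) * h3
    - (((X:ℤ[X])-1)*((X:ℤ[X])^(p*q)-1)) * h4

include hp hq hpq in
/-- prefix sums of cyclotomic pq coefficients equal the semigroup indicator -/
lemma PS_eq_NN {t : ℕ} (ht : t < p*q) (hco : Nat.Coprime p q) :
    ∑ m ∈ range (t+1), bc p q m = NN p q t := by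
  have hid := cyclo_pq_mul_geom hp hq hpq
  have h1 : (cyclotomic (p*q) ℤ * (∑ j ∈ range (p*q), X^j)).coeff t
      = ∑ m ∈ range (t+1), bc p q m := by
    rw [Finset.mul_sum, finset_sum_coeff]
    simp_rw [coeff_mul_X_pow']
    rw [← Finset.sum_subset (Finset.range_subset_range.mpr (by omega : t+1 ≤ p*q))
      (fun x _ hx => if_neg (by rw [Finset.mem_range, not_lt] at hx; omega))]
    rw [Finset.sum_congr rfl (fun j hj => if_pos (by simp at hj; omega))]
    rw [← Finset.sum_range_reflect]
    apply Finset.sum_congr rfl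
    intro j hj
    simp only [Finset.mem_range] at hj
    congr 1
    omega
  have h2 : ((∑ i ∈ range q, (X:ℤ[X])^(i*p)) * (∑ j ∈ range p, X^(j*q))).coeff t
      = NN p q t := by
    rw [Finset.sum_mul_sum]
    simp_rw [← pow_add]
    rw [finset_sum_coeff]
    simp_rw [finset_sum_coeff, coeff_X_pow]
    rw [← Finset.sum_product']
    by_cases hex : ∃ i j : ℕ, i*p + j*q = t
    · obtain ⟨i0, j0, hij⟩ := hex
      obtain ⟨hi0, hj0⟩ := rep_lt hp.two_le hpq ht hij
      rw [NN_eq_one _ ⟨i0, j0, hij⟩]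
      rw [Finset.sum_eq_single_of_mem (i0, j0)
        (Finset.mem_product.mpr ⟨Finset.mem_range.mpr hi0, Finset.mem_range.mpr hj0⟩)]
      · have e : t = (i0, j0).1 * p + (i0, j0).2 * q := hij.symm
        rw [if_pos e]
      · rintro ⟨i, j⟩ hmem hne
        apply if_neg
        intro hc
        have h9 := rep_uniq hpq hco ht hc.symm hij
        exact hne (by simp only [Prod.mk.injEq]; exact ⟨h9.1, h9.2⟩)
    · rw [NN_eq_zero _ hex]
      apply Finset.sum_eq_zero
      rintro ⟨i, j⟩ -
      exact if_neg (fun hc => hex ⟨i, j, hc.symm⟩)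
  rw [← h1, ← h2, hid]

include hp hq hpq in
lemma sum_Icc_bc_eq_SN (hco : Nat.Coprime p q) {l u : ℕ} (hu : u < p*q) :
    ∑ m ∈ Finset.Icc l u, bc p q m = SN p q l u := by
  by_cases h : l ≤ u
  · unfold SN
    rw [if_pos h, ← Finset.Ico_add_one_right_eq_Icc, Finset.sum_Ico_eq_sub _ (by omega)]
    rw [PS_eq_NN hp hq hpq hu hco]
    by_cases hl : l = 0
    · subst hl; simp
    · rw [if_neg hl]
      have e : range l = range ((l-1)+1) := by congr 1; omega
      rw [e, PS_eq_NN hp hq hpq (by omega) hco]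
  · rw [Finset.Icc_eq_empty h, Finset.sum_empty]
    unfold SN
    rw [if_neg h]

end Poly


/-! ### Master formula machinery -/

noncomputable def ak (p q r k : ℕ) : ℤ := (cyclotomic (p*q*r) ℤ).coeff k

noncomputable def rhsc (p q r k : ℕ) : ℤ :=
  (expand ℤ r (cyclotomic (p*q) ℤ) * ((X^p - 1) * (∑ j ∈ range q, X^j))).coeff k

noncomputable def ce (p q r t : ℕ) : ℤ :=
  if r ∣ t then bc p q (t/r) else 0

section Master

variable {p q r : ℕ} (hp : p.Prime) (hq : q.Prime) (hr : r.Prime)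
  (hpq : p < q) (hqr : q < r)

lemma X_sub_one_ne : ((X:ℤ[X]) - 1) ≠ 0 := by
  have := Polynomial.X_sub_C_ne_zero (1:ℤ)
  simpa using this

include hp hq hr hpq hqr in
lemma not_r_dvd_pq : ¬ r ∣ p*q := by
  intro h
  rcases (Nat.Prime.dvd_mul hr).mp h with h1 | h1
  · have := (Nat.prime_dvd_prime_iff_eq hr hp).mp h1
    omega
  · have := (Nat.prime_dvd_prime_iff_eq hr hq).mp h1
    omega

include hp hq hr hpq hqr in
lemma main_identity :
    cyclotomic (p*q*r) ℤ * (X^(p*q) - 1) =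
      expand ℤ r (cyclotomic (p*q) ℤ) * ((X^p - 1) * (∑ j ∈ range q, X^j)) := by
  have h3 := cyclotomic_expand_eq_cyclotomic_mul hr (not_r_dvd_pq hp hq hr hpq hqr) ℤ
  rw [h3, mul_assoc (cyclotomic (p*q*r) ℤ) (cyclotomic (p*q) ℤ), cyclo_pq_mul_F hp hq hpq]

include hp hq hr hpq hqr in
lemma ak_rec (k : ℕ) :
    ak p q r k = (if p*q ≤ k then ak p q r (k - p*q) else 0) - rhsc p q r k := by
  have h := main_identity hp hq hr hpq hqr
  have h2 : rhsc p q r k = (cyclotomic (p*q*r) ℤ * (X^(p*q) - 1)).coeff k := by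
    unfold rhsc; rw [h]
  rw [mul_sub, mul_one, coeff_sub, coeff_mul_X_pow'] at h2
  unfold ak at *
  split_ifs at h2 ⊢ with hc <;> linarith

include hp hq hr hpq hqr in
lemma ak_unfold (k : ℕ) :
    ak p q r k = -∑ i ∈ range (k/(p*q)+1), rhsc p q r (k - (p*q)*i) := by
  have hn0 : 0 < p*q := by
    have := hp.pos; have := hq.pos; positivity
  induction k using Nat.strong_induction_on with
  | _ k ih =>
    by_cases hk : p*q ≤ k
    · have hrec := ak_rec hp hq hr hpq hqr k
      rw [if_pos hk] at hrec
      have hdiv : k/(p*q) = (k-(p*q))/(p*q) + 1 := by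
        rw [Nat.div_eq_sub_div hn0 hk]
      have e : ∀ i : ℕ, k - (p*q)*(i+1) = (k - p*q) - (p*q)*i := by
        intro i
        have e2 : (p*q)*(i+1) = (p*q)*i + p*q := by ring
        omega
      have hsplit : ∑ i ∈ range ((k-(p*q))/(p*q) + 1 + 1), rhsc p q r (k - (p*q)*i)
          = ∑ i ∈ range ((k-(p*q))/(p*q) + 1), rhsc p q r ((k-(p*q)) - (p*q)*i)
            + rhsc p q r k := by
        rw [Finset.sum_range_succ']
        congr 1
        exact Finset.sum_congr rfl (fun i _ => by rw [e i])
      rw [hrec, ih (k-(p*q)) (by omega), hdiv, hsplit]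
      ring
    · have hrec := ak_rec hp hq hr hpq hqr k
      rw [if_neg hk] at hrec
      have hdiv : k/(p*q) = 0 := Nat.div_eq_of_lt (by omega)
      rw [hdiv, hrec]
      rw [Finset.sum_range_one]
      have e3 : k - (p*q)*0 = k := by omega
      rw [e3]
      ring

lemma F_eq : ((X:ℤ[X])^p - 1) * (∑ j ∈ range q, X^j) =
    (∑ s ∈ range p, X^(q+s)) - (∑ s ∈ range p, X^s) := by
  apply mul_right_cancel₀ X_sub_one_ne
  have hq' := geom_sum_mul (X:ℤ[X]) q
  have hp' := geom_sum_mul (X:ℤ[X]) p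
  have e : (∑ s ∈ range p, (X:ℤ[X])^(q+s)) = X^q * ∑ s ∈ range p, X^s := by
    rw [Finset.mul_sum]; exact Finset.sum_congr rfl fun s _ => pow_add X q s
  rw [e]
  linear_combination ((X:ℤ[X])^p - 1) * hq' + (1 - (X:ℤ[X])^q) * hp'

include hr in
lemma ce_eq (t : ℕ) : (expand ℤ r (cyclotomic (p*q) ℤ)).coeff t = ce p q r t := by
  rw [coeff_expand hr.pos]; rfl

include hr in
lemma rhsc_eq (k' : ℕ) : rhsc p q r k' =
    (∑ s ∈ range p, if q+s ≤ k' then ce p q r (k'-(q+s)) else 0)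
  - (∑ s ∈ range p, if s ≤ k' then ce p q r (k'-s) else 0) := by
  unfold rhsc
  rw [F_eq, mul_sub, coeff_sub, Finset.mul_sum, Finset.mul_sum,
    finset_sum_coeff, finset_sum_coeff]
  congr 1 <;> refine Finset.sum_congr rfl (fun s _ => ?_) <;>
    rw [coeff_mul_X_pow'] <;> split_ifs <;> first | rw [ce_eq hr] | rfl

include hp hq hr in
lemma sum_ce_eq (o k : ℕ) (ho : o + p ≤ p*q) :
    ∑ i ∈ range (k/(p*q)+1), ∑ s ∈ range p,
        (if o+s ≤ k - (p*q)*i then ce p q r (k-(p*q)*i-(o+s)) else 0)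
      = ∑ m ∈ (range (k+1)).filter
          (fun m => r*m ≤ k ∧ o ≤ (k-r*m) % (p*q) ∧ (k-r*m) % (p*q) < o+p),
          bc p q m := by
  have hn0 : 0 < p*q := by
    have := hp.pos; have := hq.pos; positivity
  have hr0 : 0 < r := hr.pos
  rw [← Finset.sum_product']
  unfold ce
  have estep : ∀ x : ℕ × ℕ,
      (if o+x.2 ≤ k - (p*q)*x.1 then
        (if r ∣ (k-(p*q)*x.1-(o+x.2)) then bc p q ((k-(p*q)*x.1-(o+x.2))/r) else 0) else 0)
      = (if (o+x.2 ≤ k - (p*q)*x.1 ∧ r ∣ (k-(p*q)*x.1-(o+x.2))) then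
          bc p q ((k-(p*q)*x.1-(o+x.2))/r) else 0) := by
    intro x
    rw [ite_and]
  rw [Finset.sum_congr rfl (fun x _ => estep x), ← Finset.sum_filter]
  apply Finset.sum_nbij' (i := fun x : ℕ × ℕ => (k-(p*q)*x.1-(o+x.2))/r)
    (j := fun m : ℕ => ((k-r*m)/(p*q), (k-r*m)%(p*q) - o))
  · rintro ⟨i, s⟩ hx
    simp only [Finset.mem_filter, Finset.mem_product, Finset.mem_range] at hx ⊢
    obtain ⟨⟨hi, hs⟩, hle, hdvd⟩ := hx
    obtain ⟨m, hm⟩ := hdvd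
    have hni : (p*q)*i ≤ k := by
      have h5 := (Nat.le_div_iff_mul_le hn0).mp (by omega : i ≤ k/(p*q))
      rw [Nat.mul_comm] at h5
      exact h5
    have hDr : (k-(p*q)*i-(o+s))/r = m := by
      rw [hm]; exact Nat.mul_div_cancel_left m hr0
    rw [hDr]
    have hrm : 1*m ≤ r*m := Nat.mul_le_mul (by omega) (le_refl m)
    have hkrm : k - r*m = (p*q)*i + (o+s) := by omega
    have hmod : (k - r*m) % (p*q) = o+s := by
      rw [hkrm, Nat.mul_add_mod, Nat.mod_eq_of_lt (by omega)]
    rw [hmod]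
    omega
  · intro m hm
    simp only [Finset.mem_filter, Finset.mem_product, Finset.mem_range] at hm ⊢
    obtain ⟨hmk, hrm, ho1, ho2⟩ := hm
    have hdm := Nat.div_add_mod (k-r*m) (p*q)
    have hml : (k-r*m) % (p*q) < p*q := Nat.mod_lt _ hn0
    refine ⟨⟨?_, by omega⟩, by omega, ?_⟩
    · have h5 : (k-r*m)/(p*q) ≤ k/(p*q) := Nat.div_le_div_right (by omega)
      omega
    · have he : k - (p*q)*((k-r*m)/(p*q)) - (o + ((k-r*m)%(p*q) - o)) = r*m := by
        generalize hg1 : (p*q)*((k-r*m)/(p*q)) = PA at hdm ⊢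
        omega
      rw [he]
      exact Dvd.intro m rfl
  · rintro ⟨i, s⟩ hx
    simp only [Finset.mem_filter, Finset.mem_product, Finset.mem_range] at hx
    obtain ⟨⟨hi, hs⟩, hle, hdvd⟩ := hx
    obtain ⟨m, hm⟩ := hdvd
    have hni : (p*q)*i ≤ k := by
      have h5 := (Nat.le_div_iff_mul_le hn0).mp (by omega : i ≤ k/(p*q))
      rw [Nat.mul_comm] at h5
      exact h5
    have hDr : (k-(p*q)*i-(o+s))/r = m := by
      rw [hm]; exact Nat.mul_div_cancel_left m hr0
    have hrm : 1*m ≤ r*m := Nat.mul_le_mul (by omega) (le_refl m)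
    have hkrm : k - r*m = (p*q)*i + (o+s) := by omega
    have hdivv : (k - r*m) / (p*q) = i := by
      rw [hkrm, Nat.mul_add_div hn0, Nat.div_eq_of_lt (by omega)]
      omega
    have hmod : (k - r*m) % (p*q) = o+s := by
      rw [hkrm, Nat.mul_add_mod, Nat.mod_eq_of_lt (by omega)]
    simp only [hDr, hdivv, hmod, Prod.mk.injEq]
    exact ⟨trivial, by omega⟩
  · intro m hm
    simp only [Finset.mem_filter, Finset.mem_range] at hm
    obtain ⟨hmk, hrm, ho1, ho2⟩ := hm
    have hdm := Nat.div_add_mod (k-r*m) (p*q)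
    have hml : (k-r*m) % (p*q) < p*q := Nat.mod_lt _ hn0
    have he : k - (p*q)*((k-r*m)/(p*q)) - (o + ((k-r*m)%(p*q) - o)) = r*m := by
      generalize hg1 : (p*q)*((k-r*m)/(p*q)) = PA at hdm ⊢
      omega
    rw [he]
    exact Nat.mul_div_cancel_left m hr0
  · rintro ⟨i, s⟩ hx
    rfl

end Master


section Window

variable {p q r : ℕ} (hp2 : 2 ≤ p) (hpq : p < q) (hr0 : 0 < r)

include hp2 hpq hr0 in
lemma window_pos (o k : ℕ) (ho : o + p ≤ p*q)
    (hd : ((p*q : ℕ) : ℤ) ∣ (r : ℤ) - 1) (hK : k/r ≤ p*q - p - q) :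
    (range (k+1)).filter
        (fun m => r*m ≤ k ∧ o ≤ (k-r*m) % (p*q) ∧ (k-r*m) % (p*q) < o+p)
      = Finset.Icc ((k%(p*q) + (p*q-o))%(p*q) + 1 - p)
          (min ((k%(p*q) + (p*q-o))%(p*q)) (k/r)) := by
  have hn0 : 0 < p*q := Nat.mul_pos (by omega) (by omega)
  have bridge : ∀ m : ℕ, m ≤ k/r →
      ((o ≤ (k-r*m) % (p*q) ∧ (k-r*m) % (p*q) < o+p) ↔
        ((k%(p*q) + (p*q-o))%(p*q) + 1 - p ≤ m ∧ m ≤ (k%(p*q) + (p*q-o))%(p*q))) := by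
    intro m hm
    have hrmk : r*m ≤ k := by
      have h9 := (Nat.le_div_iff_mul_le hr0).mp hm
      rw [Nat.mul_comm] at h9; exact h9
    set v := (k-r*m) % (p*q) with hvdef
    set T := (k%(p*q) + (p*q-o))%(p*q) with hTdef
    have hvlt : v < p*q := Nat.mod_lt _ hn0
    have hTlt : T < p*q := Nat.mod_lt _ hn0
    have ht1lt : k%(p*q) < p*q := Nat.mod_lt _ hn0
    have hveqN : (p*q)*((k-r*m)/(p*q)) + v + r*m = k := by
      have h9 := Nat.div_add_mod (k-r*m) (p*q)
      rw [← hvdef] at h9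
      generalize (p*q)*((k-r*m)/(p*q)) = A at h9 ⊢
      omega
    have hveqZ : ((p*q : ℕ) : ℤ)*(((k-r*m)/(p*q) : ℕ) : ℤ) + (v:ℤ) + (r:ℤ)*(m:ℤ) = (k:ℤ) := by
      exact_mod_cast hveqN
    have ht1Z : ((p*q : ℕ) : ℤ)*((k/(p*q) : ℕ) : ℤ) + ((k%(p*q) : ℕ) : ℤ) = (k:ℤ) := by
      exact_mod_cast Nat.div_add_mod k (p*q)
    have hTZ : ((p*q : ℕ) : ℤ)*(((k%(p*q) + (p*q-o))/(p*q) : ℕ) : ℤ) + (T:ℤ)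
        = ((k%(p*q) : ℕ) : ℤ) + ((p*q : ℕ) : ℤ) - (o:ℤ) := by
      have h9 : ((p*q : ℕ) : ℤ)*(((k%(p*q) + (p*q-o))/(p*q) : ℕ) : ℤ) + (T:ℤ)
          = ((k%(p*q) : ℕ) : ℤ) + (((p*q-o) : ℕ) : ℤ) := by
        exact_mod_cast Nat.div_add_mod (k%(p*q) + (p*q-o)) (p*q)
      rw [Nat.cast_sub (by omega : o ≤ p*q)] at h9
      linarith
    have hwdvd : ((p*q : ℕ) : ℤ) ∣ ((v:ℤ) + m - o - T) := by
      have e1 : (v:ℤ) + m - o - T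
          = ((p*q : ℕ) : ℤ)*(-(((k-r*m)/(p*q) : ℕ) : ℤ)) - ((r:ℤ)-1)*(m:ℤ)
            + ((p*q : ℕ) : ℤ)*((k/(p*q) : ℕ) : ℤ)
            + (((p*q : ℕ) : ℤ)*(((k%(p*q) + (p*q-o))/(p*q) : ℕ) : ℤ) - ((p*q:ℕ):ℤ)) := by
        linear_combination hveqZ - ht1Z - hTZ
      rw [e1]
      refine dvd_add (dvd_add (dvd_sub ?_ ?_) ?_) (dvd_sub ?_ dvd_rfl) <;>
        first
          | exact Dvd.intro _ rfl
          | exact hd.mul_right _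
    obtain ⟨J, hJ⟩ := hwdvd
    have hJb : -1 ≤ J ∧ J ≤ 1 := by
      constructor
      · by_contra hcon
        push_neg at hcon
        have h9 : ((p*q : ℕ) : ℤ)*J ≤ ((p*q : ℕ) : ℤ)*(-2) :=
          mul_le_mul_of_nonneg_left (by omega) (by positivity)
        omega
      · by_contra hcon
        push_neg at hcon
        have h9 : ((p*q : ℕ) : ℤ)*2 ≤ ((p*q : ℕ) : ℤ)*J :=
          mul_le_mul_of_nonneg_left (by omega) (by positivity)
        omega
    have hJ3 : J = -1 ∨ J = 0 ∨ J = 1 := by omega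
    rcases hJ3 with rfl | rfl | rfl
    · rw [show ((p*q : ℕ) : ℤ)*(-1) = -((p*q:ℕ):ℤ) by ring] at hJ
      omega
    · rw [mul_zero] at hJ
      omega
    · rw [mul_one] at hJ
      omega
  ext m
  simp only [Finset.mem_filter, Finset.mem_range, Finset.mem_Icc, le_min_iff]
  constructor
  · rintro ⟨hmk, hrm, hcond⟩
    have hm : m ≤ k/r := by
      rw [Nat.le_div_iff_mul_le hr0, Nat.mul_comm]
      exact hrm
    have := (bridge m hm).mp hcond
    exact ⟨this.1, this.2, hm⟩
  · rintro ⟨hl, hu, hm⟩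
    have hrm : r*m ≤ k := by
      have h9 := (Nat.le_div_iff_mul_le hr0).mp hm
      rw [Nat.mul_comm] at h9; exact h9
    refine ⟨by have := Nat.div_le_self k r; omega, hrm, (bridge m hm).mpr ⟨hl, hu⟩⟩

include hp2 hpq hr0 in
lemma window_neg (o k : ℕ) (ho : o + p ≤ p*q)
    (hd : ((p*q : ℕ) : ℤ) ∣ (r : ℤ) + 1) (hK : k/r ≤ p*q - p - q) :
    (range (k+1)).filter
        (fun m => r*m ≤ k ∧ o ≤ (k-r*m) % (p*q) ∧ (k-r*m) % (p*q) < o+p)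
      = (if p*q - p + 1 ≤ ((p*q - k%(p*q))%(p*q) + o) % (p*q) then
          Finset.Icc 0 (min ((((p*q - k%(p*q))%(p*q) + o) % (p*q))+p-1-p*q) (k/r))
        else
          Finset.Icc (((p*q - k%(p*q))%(p*q) + o) % (p*q))
            (min ((((p*q - k%(p*q))%(p*q) + o) % (p*q))+p-1) (k/r))) := by
  have hn0 : 0 < p*q := Nat.mul_pos (by omega) (by omega)
  have bridge : ∀ m : ℕ, m ≤ k/r →
      ((o ≤ (k-r*m) % (p*q) ∧ (k-r*m) % (p*q) < o+p) ↔
        ((if p*q - p + 1 ≤ ((p*q - k%(p*q))%(p*q) + o) % (p*q) then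
            m ≤ min ((((p*q - k%(p*q))%(p*q) + o) % (p*q))+p-1-p*q) (k/r)
          else
            ((p*q - k%(p*q))%(p*q) + o) % (p*q) ≤ m ∧
              m ≤ min ((((p*q - k%(p*q))%(p*q) + o) % (p*q))+p-1) (k/r)))) := by
    intro m hm
    have hrmk : r*m ≤ k := by
      have h9 := (Nat.le_div_iff_mul_le hr0).mp hm
      rw [Nat.mul_comm] at h9; exact h9
    set v := (k-r*m) % (p*q) with hvdef
    set B := ((p*q - k%(p*q))%(p*q) + o) % (p*q) with hBdef
    set β0 := (p*q - k%(p*q))%(p*q) with hβdef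
    have hvlt : v < p*q := Nat.mod_lt _ hn0
    have hBlt : B < p*q := Nat.mod_lt _ hn0
    have hβlt : β0 < p*q := Nat.mod_lt _ hn0
    have ht1lt : k%(p*q) < p*q := Nat.mod_lt _ hn0
    have hveqN : (p*q)*((k-r*m)/(p*q)) + v + r*m = k := by
      have h9 := Nat.div_add_mod (k-r*m) (p*q)
      rw [← hvdef] at h9
      generalize (p*q)*((k-r*m)/(p*q)) = A at h9 ⊢
      omega
    have hveqZ : ((p*q : ℕ) : ℤ)*(((k-r*m)/(p*q) : ℕ) : ℤ) + (v:ℤ) + (r:ℤ)*(m:ℤ) = (k:ℤ) := by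
      exact_mod_cast hveqN
    have ht1Z : ((p*q : ℕ) : ℤ)*((k/(p*q) : ℕ) : ℤ) + ((k%(p*q) : ℕ) : ℤ) = (k:ℤ) := by
      exact_mod_cast Nat.div_add_mod k (p*q)
    have hβZ : ((p*q : ℕ) : ℤ)*(((p*q - k%(p*q))/(p*q) : ℕ) : ℤ) + (β0:ℤ)
        = ((p*q : ℕ) : ℤ) - ((k%(p*q) : ℕ) : ℤ) := by
      have h9 : ((p*q : ℕ) : ℤ)*(((p*q - k%(p*q))/(p*q) : ℕ) : ℤ) + (β0:ℤ)
          = (((p*q - k%(p*q)) : ℕ) : ℤ) := by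
        exact_mod_cast Nat.div_add_mod (p*q - k%(p*q)) (p*q)
      rw [Nat.cast_sub (by omega : k%(p*q) ≤ p*q)] at h9
      linarith
    have hBZ : ((p*q : ℕ) : ℤ)*(((β0 + o)/(p*q) : ℕ) : ℤ) + (B:ℤ) = (β0:ℤ) + (o:ℤ) := by
      exact_mod_cast Nat.div_add_mod (β0 + o) (p*q)
    have hwdvd : ((p*q : ℕ) : ℤ) ∣ ((m:ℤ) - B - v + o) := by
      have e1 : (m:ℤ) - B - v + o
          = ((p*q : ℕ) : ℤ)*(((k-r*m)/(p*q) : ℕ) : ℤ) + ((r:ℤ)+1)*(m:ℤ)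
            - ((p*q : ℕ) : ℤ)*((k/(p*q) : ℕ) : ℤ)
            + ((p*q : ℕ) : ℤ)*(((p*q - k%(p*q))/(p*q) : ℕ) : ℤ)
            + (((p*q : ℕ) : ℤ)*(((β0 + o)/(p*q) : ℕ) : ℤ) - ((p*q:ℕ):ℤ)) := by
        linear_combination - hveqZ + ht1Z - hβZ - hBZ
      rw [e1]
      refine dvd_add (dvd_add (dvd_sub (dvd_add ?_ ?_) ?_) ?_) (dvd_sub ?_ dvd_rfl) <;>
        first
          | exact Dvd.intro _ rfl
          | exact hd.mul_right _
    obtain ⟨J, hJ⟩ := hwdvd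
    have hJb : -1 ≤ J ∧ J ≤ 1 := by
      constructor
      · by_contra hcon
        push_neg at hcon
        have h9 : ((p*q : ℕ) : ℤ)*J ≤ ((p*q : ℕ) : ℤ)*(-2) :=
          mul_le_mul_of_nonneg_left (by omega) (by positivity)
        omega
      · by_contra hcon
        push_neg at hcon
        have h9 : ((p*q : ℕ) : ℤ)*2 ≤ ((p*q : ℕ) : ℤ)*J :=
          mul_le_mul_of_nonneg_left (by omega) (by positivity)
        omega
    have hJ3 : J = -1 ∨ J = 0 ∨ J = 1 := by omega
    split_ifs with hwrap
    · rcases hJ3 with rfl | rfl | rfl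
      · rw [show ((p*q : ℕ) : ℤ)*(-1) = -((p*q:ℕ):ℤ) by ring] at hJ
        omega
      · rw [mul_zero] at hJ
        omega
      · rw [mul_one] at hJ
        omega
    · rcases hJ3 with rfl | rfl | rfl
      · rw [show ((p*q : ℕ) : ℤ)*(-1) = -((p*q:ℕ):ℤ) by ring] at hJ
        omega
      · rw [mul_zero] at hJ
        omega
      · rw [mul_one] at hJ
        omega
  split_ifs with hwrap
  · ext m
    simp only [Finset.mem_filter, Finset.mem_range, Finset.mem_Icc, le_min_iff]
    have hbridge := bridge m
    rw [if_pos hwrap] at hbridge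
    constructor
    · rintro ⟨hmk, hrm, hcond⟩
      have hm : m ≤ k/r := by
        rw [Nat.le_div_iff_mul_le hr0, Nat.mul_comm]
        exact hrm
      have h9 := (hbridge hm).mp hcond
      omega
    · rintro ⟨-, hu, hm⟩
      have hrm : r*m ≤ k := by
        have h9 := (Nat.le_div_iff_mul_le hr0).mp hm
        rw [Nat.mul_comm] at h9; exact h9
      refine ⟨by have := Nat.div_le_self k r; omega, hrm, (hbridge hm).mpr (by omega)⟩
  · ext m
    simp only [Finset.mem_filter, Finset.mem_range, Finset.mem_Icc, le_min_iff]
    have hbridge := bridge m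
    rw [if_neg hwrap] at hbridge
    constructor
    · rintro ⟨hmk, hrm, hcond⟩
      have hm : m ≤ k/r := by
        rw [Nat.le_div_iff_mul_le hr0, Nat.mul_comm]
        exact hrm
      have h9 := (hbridge hm).mp hcond
      omega
    · rintro ⟨hl, hu, hm⟩
      have hrm : r*m ≤ k := by
        have h9 := (Nat.le_div_iff_mul_le hr0).mp hm
        rw [Nat.mul_comm] at h9; exact h9
      refine ⟨by have := Nat.div_le_self k r; omega, hrm, (hbridge hm).mpr (by omega)⟩

end Window


section Assemble

variable {p q r : ℕ} (hp : p.Prime) (hq : q.Prime) (hr : r.Prime)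
  (hpq : p < q) (hqr : q < r)

include hp hq hr hpq hqr in
lemma ak_eq_filters (k : ℕ) : ak p q r k
    = ∑ m ∈ (range (k+1)).filter
        (fun m => r*m ≤ k ∧ 0 ≤ (k-r*m)%(p*q) ∧ (k-r*m)%(p*q) < 0+p), bc p q m
    - ∑ m ∈ (range (k+1)).filter
        (fun m => r*m ≤ k ∧ q ≤ (k-r*m)%(p*q) ∧ (k-r*m)%(p*q) < q+p), bc p q m := by
  have hp2 := hp.two_le
  have h2q : 2*q ≤ p*q := Nat.mul_le_mul hp2 le_rfl
  have ho0 : 0 + p ≤ p*q := by omega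
  have hoq : q + p ≤ p*q := by omega
  have h3 := ak_unfold hp hq hr hpq hqr k
  have hre : ∀ i : ℕ, rhsc p q r (k - (p*q)*i)
      = (∑ s ∈ range p, if q+s ≤ k-(p*q)*i then ce p q r (k-(p*q)*i-(q+s)) else 0)
      - (∑ s ∈ range p, if 0+s ≤ k-(p*q)*i then ce p q r (k-(p*q)*i-(0+s)) else 0) := by
    intro i
    rw [rhsc_eq hr]
    congr 1
    refine Finset.sum_congr rfl (fun s _ => ?_)
    rw [Nat.zero_add]
  rw [Finset.sum_congr rfl (fun i _ => hre i), Finset.sum_sub_distrib] at h3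
  rw [h3, sum_ce_eq hp hq hr 0 k ho0, sum_ce_eq hp hq hr q k hoq]
  ring

end Assemble

end CycFlat

theorem cyclotomic_pqr_flat_of_r_pm_one (p q r : ℕ)
    (hp : p.Prime) (hq : q.Prime) (hr : r.Prime)
    (hpq : p < q) (hqr : q < r)
    (hmod : (r : ℤ) ≡ 1 [ZMOD ((p * q : ℕ) : ℤ)] ∨
      (r : ℤ) ≡ -1 [ZMOD ((p * q : ℕ) : ℤ)]) :
    ∀ k, |(Polynomial.cyclotomic (p * q * r) ℤ).coeff k| ≤ 1 := by
  intro k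
  have hp2 := hp.two_le
  have hq2 := hq.two_le
  have hr0 := hr.pos
  have hn0 : 0 < p*q := Nat.mul_pos (by omega) (by omega)
  have hco : Nat.Coprime p q := (Nat.coprime_primes hp hq).mpr (by omega)
  by_cases hbig : (Polynomial.cyclotomic (p*q*r) ℤ).natDegree < k
  · rw [Polynomial.coeff_eq_zero_of_natDegree_lt hbig]
    simp
  · push_neg at hbig
    rw [Polynomial.natDegree_cyclotomic] at hbig
    have htot : (p*q*r).totient = (p-1)*(q-1)*(r-1) := by
      have hc1 : Nat.Coprime (p*q) r :=
        Nat.Coprime.mul ((Nat.coprime_primes hp hr).mpr (by omega))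
          ((Nat.coprime_primes hq hr).mpr (by omega))
      rw [Nat.totient_mul hc1, Nat.totient_mul hco,
        Nat.totient_prime hp, Nat.totient_prime hq, Nat.totient_prime hr]
    rw [htot] at hbig
    have hK : k/r ≤ p*q - p - q := by
      obtain ⟨a, rfl⟩ : ∃ a, p = a+1 := ⟨p-1, by omega⟩
      obtain ⟨b, rfl⟩ : ∃ b, q = b+1 := ⟨q-1, by omega⟩
      obtain ⟨c, rfl⟩ : ∃ c, r = c+1 := ⟨r-1, by omega⟩
      have e1 : ((a+1)-1)*((b+1)-1)*((c+1)-1) = a*b*c := by norm_num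
      rw [e1] at hbig
      have e2 : (a+1)*(b+1) = a*b + a + b + 1 := by ring
      have hab : 1*1 ≤ a*b := Nat.mul_le_mul (by omega) (by omega)
      have h5 : k/(c+1) < a*b := by
        rw [Nat.div_lt_iff_lt_mul (by omega)]
        have e3 : a*b*(c+1) = a*b*c + a*b := by ring
        omega
      generalize k/(c+1) = K' at h5 ⊢
      omega
    have hmaster := CycFlat.ak_eq_filters hp hq hr hpq hqr k
    have hu0lt : ∀ x : ℕ, min (x % (p*q)) (k/r) < p*q := by
      intro x
      have := Nat.mod_lt x hn0
      omega
    have ho0 : 0 + p ≤ p*q := by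
      have h2q : 2*q ≤ p*q := Nat.mul_le_mul hp2 le_rfl
      omega
    have hoq : q + p ≤ p*q := by
      have h2q : 2*q ≤ p*q := Nat.mul_le_mul hp2 le_rfl
      omega
    show |CycFlat.ak p q r k| ≤ 1
    rcases hmod with hd | hd
    · -- r ≡ 1 (mod pq)
      have hdd : ((p*q : ℕ) : ℤ) ∣ (r : ℤ) - 1 := by
        have h9 := Int.ModEq.dvd hd
        rwa [dvd_sub_comm] at h9
      have hw0 := CycFlat.window_pos hp2 hpq hr0 0 k ho0 hdd hK
      have hwq := CycFlat.window_pos hp2 hpq hr0 q k hoq hdd hK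
      have e0 : (k%(p*q) + (p*q - 0))%(p*q) = k%(p*q) := by
        rw [Nat.sub_zero, Nat.add_mod_right]
        exact Nat.mod_mod_of_dvd _ dvd_rfl
      rw [e0] at hw0
      rw [hmaster, hw0, hwq]
      rw [CycFlat.sum_Icc_bc_eq_SN hp hq hpq hco
          (by have := Nat.mod_lt k hn0; omega),
        CycFlat.sum_Icc_bc_eq_SN hp hq hpq hco
          (by have := Nat.mod_lt (k%(p*q) + (p*q-q)) hn0; omega)]
      exact CycFlat.core_pos hp2 hpq hco hK (Nat.mod_lt k hn0)
    · -- r ≡ -1 (mod pq)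
      have hdd : ((p*q : ℕ) : ℤ) ∣ (r : ℤ) + 1 := by
        have h9 := Int.ModEq.dvd hd
        have e9 : (-1 : ℤ) - r = -((r:ℤ)+1) := by ring
        rw [e9, dvd_neg] at h9
        exact h9
      have hw0 := CycFlat.window_neg hp2 hpq hr0 0 k ho0 hdd hK
      have hwq := CycFlat.window_neg hp2 hpq hr0 q k hoq hdd hK
      have e0 : ((p*q - k%(p*q))%(p*q) + 0) % (p*q) = (p*q - k%(p*q))%(p*q) := by
        rw [Nat.add_zero]
        exact Nat.mod_mod_of_dvd _ dvd_rfl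
      rw [e0] at hw0
      rw [hmaster, hw0, hwq]
      have hsum0 : ∑ m ∈ (if p*q - p + 1 ≤ (p*q - k%(p*q))%(p*q) then
            Finset.Icc 0 (min (((p*q - k%(p*q))%(p*q))+p-1-p*q) (k/r))
          else
            Finset.Icc ((p*q - k%(p*q))%(p*q))
              (min (((p*q - k%(p*q))%(p*q))+p-1) (k/r))), CycFlat.bc p q m
          = CycFlat.SNW p q (k/r) ((p*q - k%(p*q))%(p*q)) := by
        unfold CycFlat.SNW
        split_ifs with h9
        · exact CycFlat.sum_Icc_bc_eq_SN hp hq hpq hco (by omega)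
        · exact CycFlat.sum_Icc_bc_eq_SN hp hq hpq hco (by omega)
      have hsumq : ∑ m ∈ (if p*q - p + 1 ≤ ((p*q - k%(p*q))%(p*q) + q) % (p*q) then
            Finset.Icc 0 (min ((((p*q - k%(p*q))%(p*q) + q) % (p*q))+p-1-p*q) (k/r))
          else
            Finset.Icc (((p*q - k%(p*q))%(p*q) + q) % (p*q))
              (min ((((p*q - k%(p*q))%(p*q) + q) % (p*q))+p-1) (k/r))), CycFlat.bc p q m
          = CycFlat.SNW p q (k/r) (((p*q - k%(p*q))%(p*q) + q) % (p*q)) := by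
        unfold CycFlat.SNW
        split_ifs with h9
        · exact CycFlat.sum_Icc_bc_eq_SN hp hq hpq hco (by omega)
        · exact CycFlat.sum_Icc_bc_eq_SN hp hq hpq hco (by omega)
      rw [hsum0, hsumq]
      exact CycFlat.core_neg hp2 hpq hco hK (Nat.mod_lt _ hn0)
end
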